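/- arXiv:2511.01669 — 8 statements merged into one kernel-verified Lean document; each statement's English description precedes it below -/
import Mathlib

section
/- The set of pairs (u, v) of rational functions in ℚ(t) satisfying v² = u⁴ + t⁸ − 1 is infinite. (Affine form of the paper's Lemma 3.1, asserting that the genus-one curve Y² = X⁴ + (t⁸−1)Z⁴ over ℚ(t) has a dense, in particular infinite, set of ℚ(t)-points.) -/
noncomputable section

open Polynomial

namespace Stmt0Aux

abbrev K := RatFunc ℚ

def am : ℚ[X] →+* K := algebraMap ℚ[X] (RatFunc ℚ)

/-- `f` can be written `p/q` with `q(1) ≠ 0` and `p(1)/q(1) = a`. -/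
def Good (f : K) (a : ℚ) : Prop :=
  ∃ p q : ℚ[X], q.eval 1 ≠ 0 ∧ p.eval 1 = a * q.eval 1 ∧ f * am q = am p

lemma am_inj : Function.Injective am := RatFunc.algebraMap_injective ℚ

lemma am_ne_zero {p : ℚ[X]} (h : p ≠ 0) : am p ≠ 0 :=
  RatFunc.algebraMap_ne_zero h

lemma good_poly (p : ℚ[X]) : Good (am p) (p.eval 1) :=
  ⟨p, 1, by simp, by simp, by simp [am]⟩

lemma good_X : Good RatFunc.X 1 := by
  have := good_poly Polynomial.X
  simpa [am, RatFunc.algebraMap_X] using this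

lemma good_one : Good (1 : K) 1 := by simpa [am] using good_poly 1

lemma good_ofNat (n : ℕ) [n.AtLeastTwo] :
    Good (OfNat.ofNat n : K) (OfNat.ofNat n) := by
  have := good_poly (OfNat.ofNat n : ℚ[X])
  simpa [am, map_ofNat] using this

lemma good_zero : Good (0 : K) 0 := ⟨0, 1, by simp, by simp, by simp⟩

lemma two_ne : (2 : K) ≠ 0 := by
  have h := am_ne_zero (show (2 : ℚ[X]) ≠ 0 by norm_num)
  rwa [map_ofNat] at h

lemma four_ne : (4 : K) ≠ 0 := by
  have h := am_ne_zero (show (4 : ℚ[X]) ≠ 0 by norm_num)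
  rwa [map_ofNat] at h

lemma good_unique {f : K} {a b : ℚ} (ha : Good f a) (hb : Good f b) : a = b := by
  obtain ⟨p1, q1, hq1, he1, hf1⟩ := ha
  obtain ⟨p2, q2, hq2, he2, hf2⟩ := hb
  have h : am (p1 * q2) = am (p2 * q1) := by
    rw [map_mul, map_mul]
    linear_combination am q1 * hf2 - am q2 * hf1
  have h' := am_inj h
  have h'' := congrArg (Polynomial.eval 1) h'
  simp only [Polynomial.eval_mul] at h''
  rw [he1, he2] at h''
  have hne : q1.eval 1 * q2.eval 1 ≠ 0 := mul_ne_zero hq1 hq2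
  exact mul_right_cancel₀ hne (by linear_combination h'')

lemma Good.add {f g : K} {a b : ℚ} (hf : Good f a) (hg : Good g b) :
    Good (f + g) (a + b) := by
  obtain ⟨p1, q1, hq1, he1, hf1⟩ := hf
  obtain ⟨p2, q2, hq2, he2, hf2⟩ := hg
  refine ⟨p1 * q2 + p2 * q1, q1 * q2,
    by simp only [Polynomial.eval_mul]; exact mul_ne_zero hq1 hq2, ?_, ?_⟩
  · simp only [Polynomial.eval_add, Polynomial.eval_mul]
    rw [he1, he2]; ring
  · simp only [map_add, map_mul]
    linear_combination am q2 * hf1 + am q1 * hf2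

lemma Good.mul {f g : K} {a b : ℚ} (hf : Good f a) (hg : Good g b) :
    Good (f * g) (a * b) := by
  obtain ⟨p1, q1, hq1, he1, hf1⟩ := hf
  obtain ⟨p2, q2, hq2, he2, hf2⟩ := hg
  refine ⟨p1 * p2, q1 * q2,
    by simp only [Polynomial.eval_mul]; exact mul_ne_zero hq1 hq2, ?_, ?_⟩
  · simp only [Polynomial.eval_mul]
    rw [he1, he2]; ring
  · simp only [map_mul]
    linear_combination (g * am q2) * hf1 + am p1 * hf2

lemma Good.neg {f : K} {a : ℚ} (hf : Good f a) : Good (-f) (-a) := by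
  obtain ⟨p1, q1, hq1, he1, hf1⟩ := hf
  exact ⟨-p1, q1, hq1, by simp [he1], by rw [map_neg]; linear_combination -hf1⟩

lemma Good.sub {f g : K} {a b : ℚ} (hf : Good f a) (hg : Good g b) :
    Good (f - g) (a - b) := by
  have := hf.add hg.neg
  simpa [sub_eq_add_neg] using this

lemma Good.pow {f : K} {a : ℚ} (hf : Good f a) (n : ℕ) : Good (f ^ n) (a ^ n) := by
  induction n with
  | zero => simpa using good_one
  | succ n ih => rw [pow_succ, pow_succ]; exact ih.mul hf

lemma Good.div {f g : K} {a b : ℚ} (hf : Good f a) (hg : Good g b) (hb : b ≠ 0) :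
    Good (f / g) (a / b) := by
  obtain ⟨p1, q1, hq1, he1, hf1⟩ := hf
  obtain ⟨p2, q2, hq2, he2, hf2⟩ := hg
  have hp2 : p2.eval 1 ≠ 0 := by rw [he2]; exact mul_ne_zero hb hq2
  have hp2' : p2 ≠ 0 := fun h => hp2 (by simp [h])
  have hgne : g ≠ 0 := by
    rintro rfl
    rw [zero_mul] at hf2
    exact hp2' (am_inj (by rw [map_zero]; exact hf2.symm))
  refine ⟨p1 * q2, q1 * p2,
    by simp only [Polynomial.eval_mul]; exact mul_ne_zero hq1 hp2, ?_, ?_⟩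
  · simp only [Polynomial.eval_mul]
    rw [he1, he2]; field_simp
  · simp only [map_mul]
    rw [div_mul_eq_mul_div, div_eq_iff hgne]
    linear_combination am p2 * hf1 - am p1 * hf2

lemma good_ne {f : K} {a : ℚ} (hf : Good f a) (ha : a ≠ 0) : f ≠ 0 := by
  rintro rfl
  exact ha (good_unique hf good_zero)


section EC
variable {F : Type*} [Field F]

lemma ec_key (c x1 y1 x2 y2 l : F)
    (h1 : y1 ^ 2 = x1 ^ 3 + c * x1) (h2 : y2 ^ 2 = x2 ^ 3 + c * x2)
    (hl : l * (x1 - x2) = y1 - y2) :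
    (x1 - x2) ^ 6 * ((l * (x1 - (l ^ 2 - x1 - x2)) - y1) ^ 2) =
      (x1 - x2) ^ 6 * ((l ^ 2 - x1 - x2) ^ 3 + c * (l ^ 2 - x1 - x2)) := by
  linear_combination ((-1)*x1^6 + (3)*x1^5*x2 + x1^3*y1^2 + (-2)*x1^3*y1*y2 + (-9)*x1^3*x2^3 + x1^3*x2*c + (-3)*x1^2*y1^2*x2 + (6)*x1^2*y1*x2*y2 + (12)*x1^2*x2^4 + (-3)*x1^2*x2^2*c + (3)*x1*y1^2*x2^2 + (-6)*x1*y1*x2^2*y2 + (-6)*x1*x2^5 + (3)*x1*x2^3*c + (-1)*y1^2*x2^3 + (2)*y1*x2^3*y2 + x2^6 + (-1)*x2^4*c) * h1 + (x1^6 + (-6)*x1^5*x2 + (12)*x1^4*x2^2 + (-1)*x1^4*c + (2)*x1^3*y1*y2 + (-9)*x1^3*x2^3 + (3)*x1^3*x2*c + (-1)*x1^3*y2^2 + (-6)*x1^2*y1*x2*y2 + (-3)*x1^2*x2^2*c + (3)*x1^2*x2*y2^2 + (6)*x1*y1*x2^2*y2 + (3)*x1*x2^5 + x1*x2^3*c +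 (-3)*x1*x2^2*y2^2 + (-2)*y1*x2^3*y2 + (-1)*x2^6 + x2^3*y2^2) * h2 + (x1^7*l + (-3)*x1^6*y1 + (-7)*x1^6*x2*l + (-1)*x1^6*y2 + (-1)*x1^6*l^3 + (12)*x1^5*y1*x2 + x1^5*y1*l^2 + (18)*x1^5*x2^2*l + (6)*x1^5*x2*y2 + (6)*x1^5*x2*l^3 + x1^5*y2*l^2 + (-1)*x1^5*c*l + x1^4*y1^2*l + (-18)*x1^4*y1*x2^2 + (-5)*x1^4*y1*x2*l^2 + (-1)*x1^4*y1*c + (-20)*x1^4*x2^3*l + (-12)*x1^4*x2^2*y2 + (-15)*x1^4*x2^2*l^3 + (-5)*x1^4*x2*y2*l^2 + (5)*x1^4*x2*c*l + (-1)*x1^4*y2^2*l + x1^4*y2*c + x1^3*y1^3 + (-4)*x1^3*y1^2*x2*l + (-1)*x1^3*y1^2*y2 + (12)*x1^3*y1*x2^3 + (10)*x1^3*y1*x2^2*l^2 + (4)*x1^3*y1*x2*c + (-1)*x1^3*y1*y2^2 + (5)*x1^3*x2^4*l + (8)*x1^3*x2^3*y2 + (20)*x1^3*x2^3*l^3 +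 (10)*x1^3*x2^2*y2*l^2 + (-10)*x1^3*x2^2*c*l + (4)*x1^3*x2*y2^2*l + (-4)*x1^3*x2*y2*c + x1^3*y2^3 + (-3)*x1^2*y1^3*x2 + (6)*x1^2*y1^2*x2^2*l + (3)*x1^2*y1^2*x2*y2 + (-3)*x1^2*y1*x2^4 + (-10)*x1^2*y1*x2^3*l^2 + (-6)*x1^2*y1*x2^2*c + (3)*x1^2*y1*x2*y2^2 + (9)*x1^2*x2^5*l + (3)*x1^2*x2^4*y2 + (-15)*x1^2*x2^4*l^3 + (-10)*x1^2*x2^3*y2*l^2 + (10)*x1^2*x2^3*c*l + (-6)*x1^2*x2^2*y2^2*l + (6)*x1^2*x2^2*y2*c + (-3)*x1^2*x2*y2^3 + (3)*x1*y1^3*x2^2 + (-4)*x1*y1^2*x2^3*l + (-3)*x1*y1^2*x2^2*y2 + (5)*x1*y1*x2^4*l^2 + (4)*x1*y1*x2^3*c + (-3)*x1*y1*x2^2*y2^2 + (-8)*x1*x2^6*l + (-6)*x1*x2^5*y2 + (6)*x1*x2^5*l^3 + (5)*x1*x2^4*y2*l^2 + (-5)*x1*x2^4*c*l + (4)*x1*x2^3*y2^2*l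 + (-4)*x1*x2^3*y2*c + (3)*x1*x2^2*y2^3 + (-1)*y1^3*x2^3 + y1^2*x2^4*l + y1^2*x2^3*y2 + (-1)*y1*x2^5*l^2 + (-1)*y1*x2^4*c + y1*x2^3*y2^2 + (2)*x2^7*l + (2)*x2^6*y2 + (-1)*x2^6*l^3 + (-1)*x2^5*y2*l^2 + x2^5*c*l + (-1)*x2^4*y2^2*l + x2^4*y2*c + (-1)*x2^3*y2^3) * hl

lemma ec_add (c x1 y1 x2 y2 : F)
    (h1 : y1 ^ 2 = x1 ^ 3 + c * x1) (h2 : y2 ^ 2 = x2 ^ 3 + c * x2)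
    (hx : x1 - x2 ≠ 0) :
    ((y1 - y2) / (x1 - x2) * (x1 - (((y1 - y2) / (x1 - x2)) ^ 2 - x1 - x2)) - y1) ^ 2 =
      (((y1 - y2) / (x1 - x2)) ^ 2 - x1 - x2) ^ 3 +
        c * (((y1 - y2) / (x1 - x2)) ^ 2 - x1 - x2) := by
  have hl : ((y1 - y2) / (x1 - x2)) * (x1 - x2) = y1 - y2 := div_mul_cancel₀ _ hx
  have := ec_key c x1 y1 x2 y2 ((y1 - y2) / (x1 - x2)) h1 h2 hl
  exact mul_left_cancel₀ (pow_ne_zero 6 hx) this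

end EC

lemma Good.congr {f : K} {a b : ℚ} (h : Good f a) (e : a = b) : Good f b := e ▸ h

def A0 : K := 2 * RatFunc.X ^ 4 + 2
def B0 : K := 4 * RatFunc.X ^ 4 + 4
def dd : K := RatFunc.X ^ 8 - 1

def PT : ℕ → K × K
  | 0 => (RatFunc.X ^ 8, 2 * RatFunc.X ^ 4 - RatFunc.X ^ 12)
  | n + 1 =>
      ((((PT n).2 - B0) / ((PT n).1 - A0)) ^ 2 - (PT n).1 - A0,
       (((PT n).2 - B0) / ((PT n).1 - A0)) *
         ((PT n).1 - ((((PT n).2 - B0) / ((PT n).1 - A0)) ^ 2 - (PT n).1 - A0)) - (PT n).2)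

lemma good_A0 : Good A0 4 := by
  unfold A0
  exact (((good_ofNat 2).mul (good_X.pow 4)).add (good_ofNat 2)).congr (by norm_num)

lemma good_B0 : Good B0 8 := by
  unfold B0
  exact (((good_ofNat 4).mul (good_X.pow 4)).add (good_ofNat 4)).congr (by norm_num)

lemma curve_B0 : B0 ^ 2 = A0 ^ 3 - 4 * dd * A0 := by unfold A0 B0 dd; ring


lemma e1_lemma (q : ℚ) (hq0 : q ≠ 0) (hq1 : q + 1 ≠ 0) (hd : 4 / q ^ 2 - 4 ≠ 0) :
    ((8 / q ^ 3 - 8) / (4 / q ^ 2 - 4)) ^ 2 - 4 / q ^ 2 - 4 = 4 / (q + 1) ^ 2 := by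
  have hm : ((8 / q ^ 3 - 8) / (4 / q ^ 2 - 4)) * (4 / q ^ 2 - 4) = 8 / q ^ 3 - 8 :=
    div_mul_cancel₀ _ hd
  apply mul_left_cancel₀ (pow_ne_zero 2 hd)
  have expand : (4 / q ^ 2 - 4) ^ 2 * (((8 / q ^ 3 - 8) / (4 / q ^ 2 - 4)) ^ 2 - 4 / q ^ 2 - 4)
      = (8 / q ^ 3 - 8) ^ 2 - (4 / q ^ 2 + 4) * (4 / q ^ 2 - 4) ^ 2 := by
    linear_combination (((8 / q ^ 3 - 8) / (4 / q ^ 2 - 4)) * (4 / q ^ 2 - 4) + (8 / q ^ 3 - 8)) * hm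
  rw [expand]
  field_simp
  ring

lemma e2_lemma (q : ℚ) (hq0 : q ≠ 0) (hq1 : q + 1 ≠ 0) (hd : 4 / q ^ 2 - 4 ≠ 0) :
    ((8 / q ^ 3 - 8) / (4 / q ^ 2 - 4)) * (4 / q ^ 2 - 4 / (q + 1) ^ 2) - 8 / q ^ 3
      = 8 / (q + 1) ^ 3 := by
  have hm : ((8 / q ^ 3 - 8) / (4 / q ^ 2 - 4)) * (4 / q ^ 2 - 4) = 8 / q ^ 3 - 8 :=
    div_mul_cancel₀ _ hd
  apply mul_left_cancel₀ hd
  have expand : (4 / q ^ 2 - 4) * (((8 / q ^ 3 - 8) / (4 / q ^ 2 - 4)) * (4 / q ^ 2 - 4 / (q + 1) ^ 2) - 8 / q ^ 3)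
      = (8 / q ^ 3 - 8) * (4 / q ^ 2 - 4 / (q + 1) ^ 2) - (4 / q ^ 2 - 4) * (8 / q ^ 3) := by
    linear_combination (4 / q ^ 2 - 4 / (q + 1) ^ 2) * hm
  rw [expand]
  field_simp
  ring

lemma main (n : ℕ) :
    (PT n).2 ^ 2 = (PT n).1 ^ 3 - 4 * dd * (PT n).1 ∧
      Good (PT n).1 (4 / ((n : ℚ) + 2) ^ 2) ∧ Good (PT n).2 (8 / ((n : ℚ) + 2) ^ 3) := by
  induction n with
  | zero =>
    refine ⟨?_, ?_, ?_⟩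
    · simp only [PT]; unfold dd; ring
    · simp only [PT]
      exact (good_X.pow 8).congr (by norm_num)
    · simp only [PT]
      exact (((good_ofNat 2).mul (good_X.pow 4)).sub (good_X.pow 12)).congr (by norm_num)
  | succ n ih =>
    obtain ⟨hB, hA, hBv⟩ := ih
    set q : ℚ := (n : ℚ) + 2 with hqdef
    have hq0 : q ≠ 0 := by positivity
    have hq1 : q + 1 ≠ 0 := by positivity
    have hqge : (2 : ℚ) ≤ q := by
      rw [hqdef]
      have : (0:ℚ) ≤ (n:ℚ) := Nat.cast_nonneg n
      linarith
    have hd : 4 / q ^ 2 - 4 ≠ 0 := by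
      intro h
      have hq2 : q ^ 2 ≠ 0 := pow_ne_zero 2 hq0
      have h4 : (4 : ℚ) / q ^ 2 = 4 := by linarith [h]
      rw [div_eq_iff hq2] at h4
      nlinarith
    have gsubA : Good ((PT n).1 - A0) (4 / q ^ 2 - 4) := hA.sub good_A0
    have hAA0 : (PT n).1 - A0 ≠ 0 := good_ne gsubA hd
    have gL : Good (((PT n).2 - B0) / ((PT n).1 - A0)) ((8 / q ^ 3 - 8) / (4 / q ^ 2 - 4)) :=
      (hBv.sub good_B0).div gsubA hd
    have ecast : ((n + 1 : ℕ) : ℚ) + 2 = q + 1 := by rw [hqdef]; push_cast; ring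
    have e1 := e1_lemma q hq0 hq1 hd
    have gX3 : Good ((((PT n).2 - B0) / ((PT n).1 - A0)) ^ 2 - (PT n).1 - A0)
        (4 / (q + 1) ^ 2) :=
      (((gL.pow 2).sub hA).sub good_A0).congr e1
    have e2 := e2_lemma q hq0 hq1 hd
    refine ⟨?_, ?_, ?_⟩
    · have h1 : (PT n).2 ^ 2 = (PT n).1 ^ 3 + (-(4 * dd)) * (PT n).1 := by
        linear_combination hB
      have h2 : B0 ^ 2 = A0 ^ 3 + (-(4 * dd)) * A0 := by linear_combination curve_B0
      have key := ec_add (-(4 * dd)) (PT n).1 (PT n).2 A0 B0 h1 h2 hAA0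
      simp only [PT]
      linear_combination key
    · simp only [PT]
      rw [ecast]
      exact gX3
    · simp only [PT]
      rw [ecast]
      exact ((gL.mul (hA.sub gX3)).sub hBv).congr e2

def sol (n : ℕ) : K × K :=
  ((PT n).2 / (2 * (PT n).1), (PT n).1 / 2 - ((PT n).2 / (2 * (PT n).1)) ^ 2)

lemma good_u (n : ℕ) : Good (sol n).1 (1 / ((n : ℚ) + 2)) := by
  obtain ⟨hB, hA, hBv⟩ := main n
  have hq0 : ((n : ℚ) + 2) ≠ 0 := by positivity
  have h2A : Good (2 * (PT n).1) (2 * (4 / ((n : ℚ) + 2) ^ 2)) := (good_ofNat 2).mul hA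
  exact (hBv.div h2A (by positivity)).congr (by field_simp; ring)

lemma sol_mem (n : ℕ) : (sol n).2 ^ 2 = (sol n).1 ^ 4 + ((RatFunc.X : K) ^ 8 - 1) := by
  obtain ⟨hB, hA, hBv⟩ := main n
  have hA0 : (PT n).1 ≠ 0 := good_ne hA (by positivity)
  have hdd : (RatFunc.X : K) ^ 8 - 1 = dd := rfl
  have h2 := two_ne
  have h4 := four_ne
  have h2A : (2 * (PT n).1) ≠ 0 := mul_ne_zero two_ne hA0
  have h4A : (4 * (PT n).1) ≠ 0 := mul_ne_zero four_ne hA0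
  have hu2 : ((PT n).2 / (2 * (PT n).1)) ^ 2 = ((PT n).1 ^ 2 - 4 * dd) / (4 * (PT n).1) := by
    rw [div_pow, div_eq_div_iff (pow_ne_zero 2 h2A) h4A, hB]
    ring
  show ((PT n).1 / 2 - ((PT n).2 / (2 * (PT n).1)) ^ 2) ^ 2
      = ((PT n).2 / (2 * (PT n).1)) ^ 4 + ((RatFunc.X : K) ^ 8 - 1)
  rw [hdd, show ((PT n).2 / (2 * (PT n).1)) ^ 4 = (((PT n).2 / (2 * (PT n).1)) ^ 2) ^ 2 by ring,
    hu2]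
  field_simp
  ring

lemma sol_inj : Function.Injective sol := by
  intro n m h
  have h1 := good_u n
  have h2 : Good (sol n).1 (1 / ((m : ℚ) + 2)) := by rw [h]; exact good_u m
  have he := good_unique h1 h2
  have hn : ((n : ℚ) + 2) ≠ 0 := by positivity
  have hm : ((m : ℚ) + 2) ≠ 0 := by positivity
  rw [div_eq_div_iff hn hm] at he
  have : (n : ℚ) = (m : ℚ) := by linarith
  exact_mod_cast this

end Stmt0Aux

end

/-- The set of pairs `(u, v)` of rational functions in `ℚ(t)` satisfying
`v² = u⁴ + t⁸ − 1` is infinite. -/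
theorem stmt_0 :
    {p : RatFunc ℚ × RatFunc ℚ |
      p.2 ^ 2 = p.1 ^ 4 + ((RatFunc.X : RatFunc ℚ) ^ 8 - 1)}.Infinite := by
  apply Set.infinite_of_injective_forall_mem (f := Stmt0Aux.sol) Stmt0Aux.sol_inj
  intro n
  exact Stmt0Aux.sol_mem n
end

section
/- Let f be a polynomial in two variables u, v with coefficients in ℚ(t). If f(u₀, v₀) = 0 for every pair (u₀, v₀) ∈ ℚ(t) × ℚ(t) with v₀² = u₀⁴ + t⁸ − 1, then the polynomial v² − u⁴ − (t⁸ − 1) divides f in ℚ(t)[u, v]. (Zariski-density form of the paper's Lemma 3.1: the ℚ(t)-points of the affine curve v² = u⁴ + t⁸ − 1 are Zariski dense.) -/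
open MvPolynomial

noncomputable section Stmt1Aux

namespace Stmt1Aux

abbrev K := RatFunc ℚ
abbrev Qt := Polynomial ℚ

/-- Weierstrass coefficient `A = -4(t^8-1)` for `Y² = X³ + A X`. -/
def Ac : Qt := -4 * (Polynomial.X ^ 8 - 1)

/-- Iterated doubling in Jacobian coordinates, starting from the image of `(1, t⁴)`. -/
def W : ℕ → Qt × Qt × Qt
  | 0 => (2 * (1 + Polynomial.X ^ 4), 4 * (1 + Polynomial.X ^ 4), 1)
  | n + 1 =>
    let P := W n
    ((3 * P.1 ^ 2 + Ac * P.2.2 ^ 4) ^ 2 - 2 * (4 * P.1 * P.2.1 ^ 2),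
     (3 * P.1 ^ 2 + Ac * P.2.2 ^ 4) *
        (4 * P.1 * P.2.1 ^ 2 -
          ((3 * P.1 ^ 2 + Ac * P.2.2 ^ 4) ^ 2 - 2 * (4 * P.1 * P.2.1 ^ 2))) -
        8 * P.2.1 ^ 4,
     2 * P.2.1 * P.2.2)

lemma W_curve : ∀ n, (W n).2.1 ^ 2 = (W n).1 ^ 3 + Ac * (W n).1 * (W n).2.2 ^ 4
  | 0 => by
    show (4 * (1 + Polynomial.X ^ 4) : Qt) ^ 2 = _
    simp only [W, Ac]
    ring
  | n + 1 => by
    have h := W_curve n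
    show ((3 * (W n).1 ^ 2 + Ac * (W n).2.2 ^ 4) *
        (4 * (W n).1 * (W n).2.1 ^ 2 -
          ((3 * (W n).1 ^ 2 + Ac * (W n).2.2 ^ 4) ^ 2 - 2 * (4 * (W n).1 * (W n).2.1 ^ 2))) -
        8 * (W n).2.1 ^ 4) ^ 2 = _
    show _ = ((3 * (W n).1 ^ 2 + Ac * (W n).2.2 ^ 4) ^ 2 - 2 * (4 * (W n).1 * (W n).2.1 ^ 2)) ^ 3
      + Ac * ((3 * (W n).1 ^ 2 + Ac * (W n).2.2 ^ 4) ^ 2 - 2 * (4 * (W n).1 * (W n).2.1 ^ 2))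
        * (2 * (W n).2.1 * (W n).2.2) ^ 4
    linear_combination (64 * (W n).2.1 ^ 6) * h

/-- Values at `t = 1`. -/
def a (n : ℕ) : ℚ := (1 / 2) ^ n

lemma a_ne (n : ℕ) : a n ≠ 0 := pow_ne_zero _ (by norm_num)

lemma W_eval : ∀ n, Polynomial.eval 1 (W n).2.2 ≠ 0 ∧
    Polynomial.eval 1 (W n).1 = 4 * a n ^ 2 * (Polynomial.eval 1 (W n).2.2) ^ 2 ∧
    Polynomial.eval 1 (W n).2.1 = 8 * a n ^ 3 * (Polynomial.eval 1 (W n).2.2) ^ 3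
  | 0 => by
    simp [W, a]
    norm_num
  | n + 1 => by
    obtain ⟨hz, hx, hy⟩ := W_eval n
    have hAc : Polynomial.eval 1 Ac = 0 := by simp [Ac]
    have han : a (n + 1) = a n * (1 / 2) := by rw [a, a, pow_succ]
    refine ⟨?_, ?_, ?_⟩
    · show Polynomial.eval 1 (2 * (W n).2.1 * (W n).2.2) ≠ 0
      simp only [Polynomial.eval_mul, Polynomial.eval_ofNat, hy]
      exact mul_ne_zero (mul_ne_zero (by norm_num)
        (mul_ne_zero (mul_ne_zero (by norm_num) (pow_ne_zero _ (a_ne n)))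
          (pow_ne_zero _ hz))) hz
    · show Polynomial.eval 1 ((3 * (W n).1 ^ 2 + Ac * (W n).2.2 ^ 4) ^ 2
        - 2 * (4 * (W n).1 * (W n).2.1 ^ 2)) =
        4 * a (n+1) ^ 2 * (Polynomial.eval 1 (2 * (W n).2.1 * (W n).2.2)) ^ 2
      simp only [Polynomial.eval_mul, Polynomial.eval_add, Polynomial.eval_sub,
        Polynomial.eval_pow, Polynomial.eval_ofNat, hAc, hx, hy, han]
      ring
    · show Polynomial.eval 1 ((3 * (W n).1 ^ 2 + Ac * (W n).2.2 ^ 4) *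
        (4 * (W n).1 * (W n).2.1 ^ 2 -
          ((3 * (W n).1 ^ 2 + Ac * (W n).2.2 ^ 4) ^ 2 - 2 * (4 * (W n).1 * (W n).2.1 ^ 2))) -
        8 * (W n).2.1 ^ 4) =
        8 * a (n+1) ^ 3 * (Polynomial.eval 1 (2 * (W n).2.1 * (W n).2.2)) ^ 3
      simp only [Polynomial.eval_mul, Polynomial.eval_add, Polynomial.eval_sub,
        Polynomial.eval_pow, Polynomial.eval_ofNat, hAc, hx, hy, han]
      ring

lemma WX_eval (n : ℕ) : Polynomial.eval 1 (W n).1 ≠ 0 := by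
  obtain ⟨hz, hx, hy⟩ := W_eval n
  rw [hx]
  exact mul_ne_zero (mul_ne_zero (by norm_num) (pow_ne_zero _ (a_ne n))) (pow_ne_zero _ hz)

lemma WX_ne (n : ℕ) : (W n).1 ≠ 0 := fun h => WX_eval n (by rw [h]; simp)

lemma WZ_ne (n : ℕ) : (W n).2.2 ≠ 0 := fun h => (W_eval n).1 (by rw [h]; simp)

/-- numerator of v-coordinate -/
lemma WN_eval (n : ℕ) :
    Polynomial.eval 1 (2 * (W n).1 ^ 3 - (W n).2.1 ^ 2) ≠ 0 := by
  obtain ⟨hz, hx, hy⟩ := W_eval n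
  simp only [Polynomial.eval_sub, Polynomial.eval_mul, Polynomial.eval_pow,
    Polynomial.eval_ofNat, hx, hy]
  have : 2 * (4 * a n ^ 2 * Polynomial.eval 1 (W n).2.2 ^ 2) ^ 3
      - (8 * a n ^ 3 * Polynomial.eval 1 (W n).2.2 ^ 3) ^ 2
      = 64 * a n ^ 6 * Polynomial.eval 1 (W n).2.2 ^ 6 := by ring
  rw [this]
  exact mul_ne_zero (mul_ne_zero (by norm_num) (pow_ne_zero _ (a_ne n))) (pow_ne_zero _ hz)

lemma WN_ne (n : ℕ) : (2 * (W n).1 ^ 3 - (W n).2.1 ^ 2 : Qt) ≠ 0 :=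
  fun h => WN_eval n (by rw [h]; simp)

abbrev φ : Qt →+* K := algebraMap Qt K

/-- the u-coordinate of the n-th point -/
def uu (n : ℕ) : K := φ (W n).2.1 / (2 * φ ((W n).1 * (W n).2.2))

/-- the v-coordinate of the n-th point -/
def vv (n : ℕ) : K :=
  φ (2 * (W n).1 ^ 3 - (W n).2.1 ^ 2) / (4 * φ ((W n).1 ^ 2 * (W n).2.2 ^ 2))

lemma φ_ne {p : Qt} (hp : p ≠ 0) : φ p ≠ 0 := by
  simpa using (RatFunc.algebraMap_injective ℚ).ne_iff.mpr hp

lemma two_ne_K : (2 : K) ≠ 0 := by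
  have h : (2 : Qt) ≠ 0 := fun h =>
    absurd (congrArg (Polynomial.eval (1 : ℚ)) h) (by norm_num)
  have h2 := φ_ne h
  rwa [map_ofNat] at h2

lemma four_ne_K : (4 : K) ≠ 0 := by
  have h : (4 : Qt) ≠ 0 := fun h =>
    absurd (congrArg (Polynomial.eval (1 : ℚ)) h) (by norm_num)
  have h2 := φ_ne h
  rwa [map_ofNat] at h2

lemma on_curve (n : ℕ) : vv n ^ 2 = uu n ^ 4 + ((RatFunc.X : K) ^ 8 - 1) := by
  have h := congrArg φ (W_curve n)
  simp only [map_pow, map_mul, map_add, Ac, map_sub, map_neg, map_one, map_ofNat] at h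
  have hX : φ (W n).1 ≠ 0 := φ_ne (WX_ne n)
  have hZ : φ (W n).2.2 ≠ 0 := φ_ne (WZ_ne n)
  have hXX : (RatFunc.X : K) = φ Polynomial.X := (RatFunc.algebraMap_X).symm
  set D : K := 2 * (φ (W n).1 * φ (W n).2.2) with hD
  have hDne : D ≠ 0 := mul_ne_zero two_ne_K (mul_ne_zero hX hZ)
  have huu : uu n = φ (W n).2.1 / D := by rw [uu, hD, map_mul]
  have hvv : vv n = φ (2 * (W n).1 ^ 3 - (W n).2.1 ^ 2) / D ^ 2 := by
    rw [vv, hD]; congr 1; simp only [map_mul, map_pow]; ring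
  have key : φ (2 * (W n).1 ^ 3 - (W n).2.1 ^ 2) ^ 2
      = φ (W n).2.1 ^ 4 + (φ Polynomial.X ^ 8 - 1) * D ^ 4 := by
    simp only [map_sub, map_mul, map_pow, map_ofNat, hD]
    linear_combination (-4 * φ (W n).1 ^ 3) * h
  rw [huu, hvv, hXX, div_pow, div_pow, key, ← pow_mul]
  rw [add_div]
  congr 1
  rw [mul_div_assoc]
  rw [div_self (pow_ne_zero 4 hDne), mul_one]

lemma vv_ne (n : ℕ) : vv n ≠ 0 := by
  rw [vv]
  apply div_ne_zero (φ_ne (WN_ne n))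
  have hX : φ (W n).1 ≠ 0 := φ_ne (WX_ne n)
  have hZ : φ (W n).2.2 ≠ 0 := φ_ne (WZ_ne n)
  simp only [map_mul, map_pow]
  exact mul_ne_zero four_ne_K
    (mul_ne_zero (pow_ne_zero _ hX) (pow_ne_zero _ hZ))

lemma uu_inj : Function.Injective uu := by
  intro n m h
  have hXn : φ (W n).1 ≠ 0 := φ_ne (WX_ne n)
  have hXm : φ (W m).1 ≠ 0 := φ_ne (WX_ne m)
  have hZn : φ (W n).2.2 ≠ 0 := φ_ne (WZ_ne n)
  have hZm : φ (W m).2.2 ≠ 0 := φ_ne (WZ_ne m)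
  rw [uu, uu, div_eq_div_iff
    (mul_ne_zero two_ne_K (by rw [map_mul]; exact mul_ne_zero hXn hZn))
    (mul_ne_zero two_ne_K (by rw [map_mul]; exact mul_ne_zero hXm hZm))] at h
  have h2 : φ ((W n).2.1 * (2 * ((W m).1 * (W m).2.2)))
      = φ ((W m).2.1 * (2 * ((W n).1 * (W n).2.2))) := by
    simp only [map_mul, map_ofNat] at h ⊢
    linear_combination h
  have h3 := (RatFunc.algebraMap_injective ℚ) h2
  have h4 := congrArg (Polynomial.eval (1 : ℚ)) h3
  obtain ⟨hzn, hxn, hyn⟩ := W_eval n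
  obtain ⟨hzm, hxm, hym⟩ := W_eval m
  simp only [Polynomial.eval_mul, Polynomial.eval_ofNat, hxn, hxm, hyn, hym] at h4
  have hz6 : (Polynomial.eval 1 (W n).2.2 * Polynomial.eval 1 (W m).2.2) ≠ 0 :=
    mul_ne_zero hzn hzm
  have h5 : a n ^ 3 * a m ^ 2 = a m ^ 3 * a n ^ 2 := by
    have e1 : (8 * a n ^ 3 * Polynomial.eval 1 (W n).2.2 ^ 3) *
        (2 * (4 * a m ^ 2 * Polynomial.eval 1 (W m).2.2 ^ 2 * Polynomial.eval 1 (W m).2.2))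
        = 64 * (a n ^ 3 * a m ^ 2) *
          (Polynomial.eval 1 (W n).2.2 * Polynomial.eval 1 (W m).2.2) ^ 3 := by ring
    have e2 : (8 * a m ^ 3 * Polynomial.eval 1 (W m).2.2 ^ 3) *
        (2 * (4 * a n ^ 2 * Polynomial.eval 1 (W n).2.2 ^ 2 * Polynomial.eval 1 (W n).2.2))
        = 64 * (a m ^ 3 * a n ^ 2) *
          (Polynomial.eval 1 (W n).2.2 * Polynomial.eval 1 (W m).2.2) ^ 3 := by ring
    rw [e1, e2] at h4
    have h4' := mul_right_cancel₀ (pow_ne_zero 3 hz6) h4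
    have h64 : (64 : ℚ) ≠ 0 := by norm_num
    exact mul_left_cancel₀ h64 h4'
  have h6 : a n = a m := by
    have hmn : a n ^ 3 * a m ^ 2 - a m ^ 3 * a n ^ 2 = a n ^ 2 * a m ^ 2 * (a n - a m) := by
      ring
    have hz : a n ^ 2 * a m ^ 2 * (a n - a m) = 0 := by rw [← hmn, h5]; ring
    rcases mul_eq_zero.mp hz with h' | h'
    · exact absurd h' (mul_ne_zero (pow_ne_zero _ (a_ne n)) (pow_ne_zero _ (a_ne m)))
    · linarith [sub_eq_zero.mp h']
  -- (1/2)^n = (1/2)^m → n = m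
  rw [a, a, one_div, inv_pow, inv_pow, inv_inj] at h6
  have h8 : ((2 ^ n : ℕ) : ℚ) = ((2 ^ m : ℕ) : ℚ) := by push_cast; exact h6
  exact Nat.pow_right_injective (le_refl 2) (Nat.cast_injective h8)


/-- `MvPolynomial (Fin 1) K ≃ K[X]`. -/
def inner1 : MvPolynomial (Fin 1) K ≃ₐ[K] Polynomial K :=
  (finSuccEquiv K 0).trans (Polynomial.mapAlgEquiv (isEmptyAlgEquiv K (Fin 0)))

lemma inner1_X0 : inner1 (X 0) = Polynomial.X := by
  rw [inner1, AlgEquiv.trans_apply, finSuccEquiv_X_zero]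
  have h4 := congrFun (Polynomial.coe_mapAlgEquiv (isEmptyAlgEquiv K (Fin 0)))
    (Polynomial.X (R := MvPolynomial (Fin 0) K))
  rw [h4, Polynomial.map_X]

/-- Two-variable polynomials as `(K[u])[v]`: `X 0 ↦ C X`, `X 1 ↦ X`. -/
def e2 : MvPolynomial (Fin 2) K ≃ₐ[K] Polynomial (Polynomial K) :=
  (renameEquiv K (Equiv.swap 0 1)).trans
    ((finSuccEquiv K 1).trans (Polynomial.mapAlgEquiv inner1))

lemma e2_X0 : e2 (X 0) = Polynomial.C Polynomial.X := by
  have h1 : (Equiv.swap (0 : Fin 2) 1) 0 = Fin.succ 0 := by decide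
  rw [e2]
  simp only [AlgEquiv.trans_apply, renameEquiv_apply, rename_X, h1,
    finSuccEquiv_X_succ]
  have h3 := congrFun (Polynomial.coe_mapAlgEquiv inner1)
    (Polynomial.C (X (0 : Fin 1)))
  rw [h3, Polynomial.map_C]
  rw [show ((↑inner1 : MvPolynomial (Fin 1) K →+* Polynomial K) (X 0)) = inner1 (X 0)
    from rfl]
  rw [inner1_X0]

lemma e2_X1 : e2 (X 1) = Polynomial.X := by
  have h1 : (Equiv.swap (0 : Fin 2) 1) 1 = 0 := Equiv.swap_apply_right 0 1
  rw [e2]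
  simp only [AlgEquiv.trans_apply, renameEquiv_apply, rename_X, h1, finSuccEquiv_X_zero]
  have h3 := congrFun (Polynomial.coe_mapAlgEquiv inner1) Polynomial.X
  rw [h3, Polynomial.map_X]

lemma e2_C (x : K) : e2 (C x) = Polynomial.C (Polynomial.C x) := by
  have h1 : (C x : MvPolynomial (Fin 2) K) = algebraMap K _ x := rfl
  rw [h1, AlgEquiv.commutes]
  rfl

/-- Evaluation of `(K[u])[v]` at `(u₀, v₀)`. -/
def Ψ (u₀ v₀ : K) : Polynomial (Polynomial K) →ₐ[K] K :=
  (Polynomial.aeval v₀).comp (Polynomial.mapAlgHom (Polynomial.aeval u₀))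

lemma Ψ_C (u₀ v₀ : K) (p : Polynomial K) :
    Ψ u₀ v₀ (Polynomial.C p) = Polynomial.eval u₀ p := by
  rw [Ψ]
  simp [Polynomial.coe_mapAlgHom, Polynomial.map_C, Polynomial.aeval_C,
    Polynomial.coe_aeval_eq_eval]

lemma Ψ_X (u₀ v₀ : K) : Ψ u₀ v₀ Polynomial.X = v₀ := by
  rw [Ψ]
  simp [Polynomial.coe_mapAlgHom]

lemma Ψ_e2 (u₀ v₀ : K) (p : MvPolynomial (Fin 2) K) :
    Ψ u₀ v₀ (e2 p) = MvPolynomial.eval ![u₀, v₀] p := by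
  have key : (Ψ u₀ v₀).comp (e2 : MvPolynomial (Fin 2) K →ₐ[K] Polynomial (Polynomial K))
      = MvPolynomial.aeval ![u₀, v₀] := by
    apply MvPolynomial.algHom_ext
    intro i
    refine Fin.cases ?_ (fun j => ?_) i
    · show (Ψ u₀ v₀) (e2 (X 0)) = (aeval ![u₀, v₀]) (X 0)
      rw [e2_X0, Ψ_C, Polynomial.eval_X, aeval_X]
      simp
    · have hj : j = 0 := Subsingleton.elim _ _
      subst hj
      show (Ψ u₀ v₀) (e2 (X 1)) = (aeval ![u₀, v₀]) (X 1)
      rw [e2_X1, Ψ_X, aeval_X]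
      simp
  have h1 := congrArg (fun ψ => ψ p) key
  simp only [AlgHom.comp_apply, AlgEquiv.coe_algHom] at h1
  rw [← MvPolynomial.coe_aeval_eq_eval]
  exact h1

end Stmt1Aux

end Stmt1Aux

/-- If a two-variable polynomial `f` over `ℚ(t)` vanishes at every `ℚ(t)`-point
`(u₀, v₀)` of the affine curve `v² = u⁴ + t⁸ − 1`, then `v² − u⁴ − (t⁸ − 1)`
divides `f`.  Here `u = X 0`, `v = X 1`. -/
theorem stmt_1 (f : MvPolynomial (Fin 2) (RatFunc ℚ))
    (hf : ∀ u₀ v₀ : RatFunc ℚ,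
      v₀ ^ 2 = u₀ ^ 4 + ((RatFunc.X : RatFunc ℚ) ^ 8 - 1) →
      MvPolynomial.eval ![u₀, v₀] f = 0) :
    ((X 1 : MvPolynomial (Fin 2) (RatFunc ℚ)) ^ 2 - (X 0) ^ 4
      - C ((RatFunc.X : RatFunc ℚ) ^ 8 - 1)) ∣ f := by
  classical
  open Stmt1Aux in
  set c : K := (RatFunc.X : K) ^ 8 - 1 with hc
  set G : Polynomial (Polynomial K) := Polynomial.X ^ 2
      - Polynomial.C (Polynomial.X ^ 4 + Polynomial.C c) with hG
  have hGmonic : G.Monic := Polynomial.monic_X_pow_sub_C _ (by norm_num)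
  have he2g : e2 ((X 1 : MvPolynomial (Fin 2) K) ^ 2 - (X 0) ^ 4 - C c) = G := by
    simp only [map_sub, map_pow, e2_X0, e2_X1, e2_C, hG]
    rw [Polynomial.C_add, ← Polynomial.C_pow]
    ring
  set F := e2 f with hF
  set r := F %ₘ G with hr
  have hdeg : r.degree < 2 := by
    have h1 := Polynomial.degree_modByMonic_lt F hGmonic
    have h2 : G.degree = 2 := by
      rw [hG]
      exact Polynomial.degree_X_pow_sub_C (by norm_num) _
    rwa [h2] at h1
  have hdeg1 : r.degree ≤ 1 := by
    by_contra hcon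
    push_neg at hcon
    have := Nat.WithBot.add_one_le_of_lt hcon
    norm_num at this
    exact absurd hdeg (not_lt.mpr this)
  have hrform : r = Polynomial.C (r.coeff 1) * Polynomial.X + Polynomial.C (r.coeff 0) :=
    Polynomial.eq_X_add_C_of_degree_le_one hdeg1
  have hmod : G * (F /ₘ G) + r = F := by
    rw [add_comm]; exact Polynomial.modByMonic_add_div F G
  have hpoint : ∀ n : ℕ, Polynomial.eval (uu n) (r.coeff 1) = 0 ∧
      Polynomial.eval (uu n) (r.coeff 0) = 0 := by
    intro n
    have hcurve := on_curve n
    have h1 := hf _ _ hcurve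
    have h2 := hf (uu n) (-(vv n))
      (by rw [show (-(vv n)) ^ 2 = (vv n) ^ 2 by ring]; exact hcurve)
    have hGval : ∀ v₀ : K, v₀ ^ 2 = (uu n) ^ 4 + c → Ψ (uu n) v₀ G = 0 := by
      intro v₀ hv
      rw [hG]
      simp only [map_sub, map_add, map_pow, Ψ_X, Ψ_C]
      simp only [Polynomial.eval_add, Polynomial.eval_pow, Polynomial.eval_X,
        Polynomial.eval_C]
      rw [hv]; ring
    have hrval : ∀ v₀ : K, v₀ ^ 2 = (uu n) ^ 4 + c →
        MvPolynomial.eval ![uu n, v₀] f = 0 →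
        Polynomial.eval (uu n) (r.coeff 1) * v₀ + Polynomial.eval (uu n) (r.coeff 0) = 0 := by
      intro v₀ hv hev
      have hm := congrArg (Ψ (uu n) v₀) hmod
      rw [map_add, map_mul, hGval v₀ hv, zero_mul, zero_add, Ψ_e2, hev] at hm
      rw [← hm, hrform]
      simp only [map_add, map_mul, Ψ_X, Ψ_C]
      simp
    have e1 := hrval (vv n) hcurve h1
    have e2' := hrval (-(vv n))
      (by rw [show (-(vv n)) ^ 2 = (vv n) ^ 2 by ring]; exact hcurve) h2
    have hb : Polynomial.eval (uu n) (r.coeff 0) = 0 := by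
      have hsum : 2 * Polynomial.eval (uu n) (r.coeff 0) = 0 := by
        linear_combination e1 + e2'
      have := mul_eq_zero.mp hsum
      rcases this with h | h
      · exact absurd h two_ne_K
      · exact h
    have ha : Polynomial.eval (uu n) (r.coeff 1) = 0 := by
      have hsub : Polynomial.eval (uu n) (r.coeff 1) * (2 * vv n) = 0 := by
        linear_combination e1 - e2'
      rcases mul_eq_zero.mp hsub with h | h
      · exact h
      · exact absurd h (mul_ne_zero two_ne_K (vv_ne n))
    exact ⟨ha, hb⟩
  have hA1 : r.coeff 1 = 0 :=
    Polynomial.eq_zero_of_infinite_isRoot _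
      (Set.infinite_of_injective_forall_mem uu_inj (fun n => (hpoint n).1))
  have hB0 : r.coeff 0 = 0 :=
    Polynomial.eq_zero_of_infinite_isRoot _
      (Set.infinite_of_injective_forall_mem uu_inj (fun n => (hpoint n).2))
  have hr0 : r = 0 := by rw [hrform, hA1, hB0]; simp
  have hdvd : G ∣ F := (Polynomial.modByMonic_eq_zero_iff_dvd hGmonic).mp hr0
  have h5 : e2.symm G ∣ e2.symm F := map_dvd e2.symm hdvd
  rwa [← he2g, AlgEquiv.symm_apply_apply, hF, AlgEquiv.symm_apply_apply] at h5
end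

section
/- On the Weierstrass elliptic curve E over ℚ given by y² = x³ − 1020x (i.e., a₁ = a₂ = a₃ = a₆ = 0 and a₄ = −1020), the affine rational point (34, 68) lies on E and has infinite order in E(ℚ): n • P ≠ 0 for every positive integer n. (This is the specialization t = 2 verified in the proof of the paper's Lemma 3.1: the point (1, 16) on the quartic curve y² = x⁴ + 255 maps to a non-torsion point on the associated elliptic curve, whose Weierstrass model is y² = x³ − 4·255·x.) -/
open WeierstrassCurve.Affine

/-- The Weierstrass elliptic curve `y² = x³ − 1020x` over `ℚ`. -/
def E4 : WeierstrassCurve.Affine ℚ :=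
  { a₁ := 0, a₂ := 0, a₃ := 0, a₄ := -1020, a₆ := 0 }

noncomputable def phi (x : ℚ) : ZMod 2 × ZMod 2 :=
  ((padicValRat 17 x : ZMod 2), if x < 0 then 1 else 0)

lemma sign_bit_mul {r s : ℚ} (hr : r ≠ 0) (hs : s ≠ 0) :
    (if r * s < 0 then (1 : ZMod 2) else 0) = (if r < 0 then 1 else 0) + (if s < 0 then 1 else 0) := by
  rcases hr.lt_or_gt with h | h <;> rcases hs.lt_or_gt with h' | h'
  · rw [if_neg (not_lt.2 (mul_pos_of_neg_of_neg h h').le), if_pos h, if_pos h']; decide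
  · rw [if_pos (mul_neg_of_neg_of_pos h h'), if_pos h, if_neg (not_lt.2 h'.le)]; decide
  · rw [if_pos (mul_neg_of_pos_of_neg h h'), if_neg (not_lt.2 h.le), if_pos h']; decide
  · rw [if_neg (not_lt.2 (mul_pos h h').le), if_neg (not_lt.2 h.le), if_neg (not_lt.2 h'.le)]; decide

lemma phi_mul {r s : ℚ} (hr : r ≠ 0) (hs : s ≠ 0) : phi (r * s) = phi r + phi s := by
  haveI : Fact (Nat.Prime 17) := ⟨by norm_num⟩
  have hv := padicValRat.mul (p := 17) hr hs
  unfold phi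
  rw [Prod.mk_add_mk, hv, sign_bit_mul hr hs, Int.cast_add]

lemma two_smul_zmod (g : ZMod 2 × ZMod 2) : g + g = 0 := by
  revert g; decide

lemma phi_sq {t : ℚ} (ht : t ≠ 0) : phi (t ^ 2) = 0 := by
  rw [sq, phi_mul ht ht, two_smul_zmod]

lemma padicValRat_nat_cast (n : ℕ) (hn : ¬ (17 ∣ n)) : padicValRat 17 (n : ℚ) = 0 := by
  rw [padicValRat.of_nat, padicValNat.eq_zero_of_not_dvd hn, Int.ofNat_zero]

lemma phi_17mul (m : ℚ) (hm : m ≠ 0) : phi (17 * m) = (1, 0) + phi m := by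
  haveI : Fact (Nat.Prime 17) := ⟨by norm_num⟩
  rw [phi_mul (by norm_num) hm]
  congr 1
  unfold phi
  have : padicValRat 17 (17 : ℚ) = 1 := by
    rw [show (17:ℚ) = ((17:ℕ):ℚ) by norm_num, padicValRat.self (by norm_num)]
  rw [this]
  norm_num

lemma phi_34 : phi 34 = (1, 0) := by
  rw [show (34:ℚ) = 17 * 2 by norm_num, phi_17mul 2 (by norm_num)]
  unfold phi
  rw [show (2:ℚ) = ((2:ℕ):ℚ) by norm_num, padicValRat_nat_cast 2 (by norm_num)]
  norm_num

lemma phi_neg1020 : phi (-1020) = (1, 1) := by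
  rw [show (-1020:ℚ) = 17 * (-60) by norm_num, phi_17mul (-60) (by norm_num)]
  have : phi (-60) = (0, 1) := by
    unfold phi
    haveI : Fact (Nat.Prime 17) := ⟨by norm_num⟩
    rw [show (-60:ℚ) = -((60:ℕ):ℚ) by norm_num, padicValRat.neg, padicValRat_nat_cast 60 (by norm_num)]
    norm_num
  rw [this]
  decide

lemma phi_1020 : phi 1020 = (1, 0) := by
  rw [show (1020:ℚ) = 17 * 60 by norm_num, phi_17mul 60 (by norm_num)]
  have : phi 60 = (0, 0) := by
    unfold phi
    haveI : Fact (Nat.Prime 17) := ⟨by norm_num⟩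
    rw [show (60:ℚ) = ((60:ℕ):ℚ) by norm_num, padicValRat_nat_cast 60 (by norm_num)]
    norm_num
  rw [this]
  decide


lemma E4_a1 : E4.a₁ = 0 := rfl
lemma E4_a2 : E4.a₂ = 0 := rfl
lemma E4_a3 : E4.a₃ = 0 := rfl
lemma E4_a4 : E4.a₄ = -1020 := rfl
lemma E4_a6 : E4.a₆ = 0 := rfl

lemma E4_negY (x y : ℚ) : E4.negY x y = -y := by
  simp [WeierstrassCurve.Affine.negY, E4_a1, E4_a3]

lemma E4_equation {x y : ℚ} (h : E4.Equation x y) : y ^ 2 = x ^ 3 - 1020 * x := by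
  have := (E4.equation_iff x y).mp h
  rw [E4_a1, E4_a2, E4_a3, E4_a4, E4_a6] at this
  linarith

lemma E4_addX (x₁ x₂ L : ℚ) : E4.addX x₁ x₂ L = L ^ 2 - x₁ - x₂ := by
  simp [WeierstrassCurve.Affine.addX, E4_a1, E4_a2]

lemma secant_id {x₁ y₁ x₂ y₂ L : ℚ} (e₁ : y₁ ^ 2 = x₁ ^ 3 - 1020 * x₁)
    (e₂ : y₂ ^ 2 = x₂ ^ 3 - 1020 * x₂) (hx : x₁ ≠ x₂) (hL : L * (x₁ - x₂) = y₁ - y₂) :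
    x₁ * x₂ * (L ^ 2 - x₁ - x₂) = (L * x₁ - y₁) ^ 2 := by
  have hd : x₁ - x₂ ≠ 0 := sub_ne_zero.mpr hx
  have hy₂ : y₂ = y₁ - L * (x₁ - x₂) := by linarith
  subst hy₂
  have key : (x₁ - x₂) * (x₁ * x₂ * (L ^ 2 - x₁ - x₂) - (L * x₁ - y₁) ^ 2) = 0 := by
    linear_combination x₂ * e₁ - x₁ * e₂
  rcases mul_eq_zero.mp key with h | h
  · exact absurd h hd
  · linarith

lemma tangent_id {x₁ y₁ L : ℚ} (e₁ : y₁ ^ 2 = x₁ ^ 3 - 1020 * x₁)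
    (hL : L * (2 * y₁) = 3 * x₁ ^ 2 - 1020) :
    x₁ * x₁ * (L ^ 2 - x₁ - x₁) = (L * x₁ - y₁) ^ 2 := by
  linear_combination x₁ * hL - e₁

lemma phi_of_mul_sq {r s t w : ℚ} (hr : r ≠ 0) (hs : s ≠ 0) (ht : t ≠ 0) (hw : w ≠ 0)
    (h : r * s * t = w ^ 2) : phi r = phi s + phi t := by
  have h0 := phi_sq hw
  rw [← h, phi_mul (mul_ne_zero hr hs) ht, phi_mul hr hs] at h0
  calc phi r = phi r + (phi r + phi s + phi t) := by rw [h0, add_zero]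
    _ = (phi r + phi r) + (phi s + phi t) := by abel
    _ = phi s + phi t := by rw [two_smul_zmod, zero_add]

noncomputable def xcl (x : ℚ) : ZMod 2 × ZMod 2 := if x = 0 then phi (-1020) else phi x

noncomputable def alpha : E4.Point → ZMod 2 × ZMod 2
  | .zero => 0
  | @WeierstrassCurve.Affine.Point.some _ _ _ x _ _ => xcl x

lemma alpha_zero : alpha 0 = 0 := rfl

lemma alpha_some {x y : ℚ} (h : E4.Nonsingular x y) : alpha (.some _ _ h) = xcl x := rfl

lemma xcl_sq_add (x : ℚ) : xcl x + xcl x = 0 := two_smul_zmod _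

lemma alpha_add (P Q : E4.Point) : alpha (P + Q) = alpha P + alpha Q := by
  cases P with
  | zero =>
    rw [show (Point.zero : E4.Point) = 0 from rfl, zero_add, alpha_zero, zero_add]
  | @some x₁ y₁ h₁ =>
    cases Q with
    | zero =>
      rw [show (Point.zero : E4.Point) = 0 from rfl, add_zero, alpha_zero, add_zero]
    | @some x₂ y₂ h₂ =>
      have e₁ : y₁ ^ 2 = x₁ ^ 3 - 1020 * x₁ := E4_equation h₁.1
      have e₂ : y₂ ^ 2 = x₂ ^ 3 - 1020 * x₂ := E4_equation h₂.1
      by_cases hx : x₁ = x₂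
      · by_cases hy : y₁ = E4.negY x₂ y₂
        · rw [Point.add_of_Y_eq hx hy, alpha_zero, alpha_some, alpha_some, hx, xcl_sq_add]
        · -- tangent case
          subst hx
          have hy₂ : y₁ = y₂ := Y_eq_of_Y_ne h₁.1 h₂.1 rfl hy
          subst hy₂
          have hy₁ : y₁ ≠ 0 := by
            intro h0
            exact hy (by rw [E4_negY, h0, neg_zero])
          have hx₁ : x₁ ≠ 0 := by
            intro h0
            apply hy₁
            have : y₁ ^ 2 = 0 := by rw [e₁, h0]; ring
            exact pow_eq_zero_iff (n := 2) (by norm_num) |>.mp this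
          rw [Point.add_of_Y_ne hy, alpha_some, alpha_some, xcl_sq_add]
          set L := E4.slope x₁ x₁ y₁ y₁ with hLdef
          have hL : L * (2 * y₁) = 3 * x₁ ^ 2 - 1020 := by
            rw [hLdef, slope_of_Y_ne rfl hy, E4_negY, E4_a1, E4_a2, E4_a4]
            field_simp [hy₁]
            ring
          have hid := tangent_id e₁ hL
          rw [E4_addX]
          set x₃ := L ^ 2 - x₁ - x₁ with hx₃def
          by_cases hx3 : x₃ = 0
          · exfalso
            have hu2 : (L * x₁ - y₁) ^ 2 = 0 := by rw [← hid, hx3, mul_zero]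
            have hu : L * x₁ = y₁ := by
              have := pow_eq_zero_iff (n := 2) (by norm_num) |>.mp hu2
              linarith
            have hx30 : L ^ 2 - x₁ - x₁ = 0 := hx3
            have hT : x₁ ^ 3 + 1020 * x₁ = 0 := by
              linear_combination 2 * e₁ - x₁ * hL + 2 * y₁ * hu
            have hpos : x₁ ^ 2 + 1020 > 0 := by positivity
            have : x₁ * (x₁ ^ 2 + 1020) = 0 := by linarith [hT]
            rcases mul_eq_zero.mp this with h | h
            · exact hx₁ h
            · linarith
          · rw [xcl, if_neg hx3]
            have ht : x₃ = ((L * x₁ - y₁) / x₁) ^ 2 := by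
              rw [div_pow, ← hid, hx₃def]
              field_simp
            have htne : (L * x₁ - y₁) / x₁ ≠ 0 := by
              intro h0
              exact hx3 (by rw [ht, h0]; ring)
            rw [ht, phi_sq htne]
      · -- secant case
        rw [Point.add_of_X_ne hx, alpha_some, alpha_some, alpha_some, E4_addX]
        set L := E4.slope x₁ x₂ y₁ y₂ with hLdef
        have hd : x₁ - x₂ ≠ 0 := sub_ne_zero.mpr hx
        have hL : L * (x₁ - x₂) = y₁ - y₂ := by
          rw [hLdef, slope_of_X_ne hx]
          field_simp
        set x₃ := L ^ 2 - x₁ - x₂ with hx₃def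
        by_cases h10 : x₁ = 0
        · subst h10
          have hy₁ : y₁ = 0 := by
            have : y₁ ^ 2 = 0 := by rw [e₁]; ring
            exact pow_eq_zero_iff (n := 2) (by norm_num) |>.mp this
          subst hy₁
          have hx₂ : x₂ ≠ 0 := fun h => hx h.symm
          have hLx₂ : L * x₂ = y₂ := by
            have := hL
            linarith [hL]
          have hx₂x₃ : x₂ * x₃ = -1020 := by
            have hT : x₂ * (x₂ * x₃ + 1020) = 0 := by
              rw [hx₃def]
              linear_combination (L * x₂ + y₂) * hLx₂ + e₂
            rcases mul_eq_zero.mp hT with h | h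
            · exact absurd h hx₂
            · linarith
          have hx₃ : x₃ ≠ 0 := by
            intro h0
            rw [h0, mul_zero] at hx₂x₃
            norm_num at hx₂x₃
          rw [xcl, if_neg hx₃, xcl, if_pos rfl, xcl, if_neg hx₂]
          exact phi_of_mul_sq hx₃ (by norm_num) hx₂ (show (1020:ℚ) ≠ 0 by norm_num)
            (by linear_combination -1020 * hx₂x₃)
        · by_cases h20 : x₂ = 0
          · subst h20
            have hy₂ : y₂ = 0 := by
              have : y₂ ^ 2 = 0 := by rw [e₂]; ring
              exact pow_eq_zero_iff (n := 2) (by norm_num) |>.mp this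
            subst hy₂
            have hLx₁ : L * x₁ = y₁ := by linarith [hL]
            have hx₁x₃ : x₁ * x₃ = -1020 := by
              have hT : x₁ * (x₁ * x₃ + 1020) = 0 := by
                rw [hx₃def]
                linear_combination (L * x₁ + y₁) * hLx₁ + e₁
              rcases mul_eq_zero.mp hT with h | h
              · exact absurd h h10
              · linarith
            have hx₃ : x₃ ≠ 0 := by
              intro h0
              rw [h0, mul_zero] at hx₁x₃
              norm_num at hx₁x₃
            rw [xcl, if_neg hx₃, xcl, if_neg h10, xcl, if_pos rfl]
            exact phi_of_mul_sq hx₃ h10 (by norm_num)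
              (w := 1020) (by norm_num)
              (by linear_combination -1020 * hx₁x₃)
          · have hid : x₁ * x₂ * x₃ = (L * x₁ - y₁) ^ 2 := secant_id e₁ e₂ hx hL
            by_cases hx3 : x₃ = 0
            · have hu : L * x₁ = y₁ := by
                have hu2 : (L * x₁ - y₁) ^ 2 = 0 := by rw [← hid, hx3, mul_zero]
                have := pow_eq_zero_iff (n := 2) (by norm_num) |>.mp hu2
                linarith
              have hx30 : L ^ 2 - x₁ - x₂ = 0 := hx3
              have hx₁x₂ : x₁ * x₂ = -1020 := by
                have hT : x₁ * (x₁ * x₂ + 1020) = 0 := by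
                  linear_combination e₁ + (L * x₁ + y₁) * hu - x₁ ^ 2 * hx30
                rcases mul_eq_zero.mp hT with h | h
                · exact absurd h h10
                · linarith
              rw [hx3, xcl, if_pos rfl, xcl, if_neg h10, xcl, if_neg h20]
              exact phi_of_mul_sq (by norm_num) h10 h20 (w := 1020) (by norm_num)
                (by linear_combination -1020 * hx₁x₂)
            · have hu : L * x₁ - y₁ ≠ 0 := by
                intro h0
                apply hx3
                have : x₁ * x₂ * x₃ = 0 := by rw [hid, h0]; ring
                rcases mul_eq_zero.mp this with h | h
                · rcases mul_eq_zero.mp h with h' | h'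
                  · exact absurd h' h10
                  · exact absurd h' h20
                · exact h
              rw [xcl, if_neg hx3, xcl, if_neg h10, xcl, if_neg h20]
              exact phi_of_mul_sq hx3 h10 h20 hu (by linear_combination hid)

lemma alpha_nsmul (k : ℕ) (P : E4.Point) : alpha (k • P) = k • alpha P := by
  induction k with
  | zero => rw [zero_nsmul, zero_nsmul, alpha_zero]
  | succ n ih => rw [succ_nsmul, succ_nsmul, alpha_add, ih]

lemma nsmul_char2 (k : ℕ) (g : ZMod 2 × ZMod 2) : k • g = if k % 2 = 0 then 0 else g := by
  induction k with
  | zero => simp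
  | succ n ih =>
    rw [succ_nsmul, ih]
    rcases Nat.even_or_odd n with h | h
    · have h2 : n % 2 = 0 := Nat.even_iff.mp h
      have h3 : (n + 1) % 2 = 1 := by omega
      rw [if_pos h2, if_neg (by omega), zero_add]
    · have h2 : n % 2 = 1 := Nat.odd_iff.mp h
      rw [if_neg (by omega), if_pos (by omega), two_smul_zmod]

lemma E4_nonsingular_34_68 : E4.Nonsingular 34 68 := by
  rw [WeierstrassCurve.Affine.nonsingular_iff, WeierstrassCurve.Affine.equation_iff]
  rw [E4_a1, E4_a2, E4_a3, E4_a4, E4_a6]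
  constructor
  · norm_num
  · left
    norm_num

/-- The point `(34, 68)` lies on the curve `y² = x³ − 1020x` over `ℚ`
(it is a nonsingular point of it) and has infinite order in `E(ℚ)`. -/
theorem stmt_4 :
    ∃ h : E4.Nonsingular 34 68,
      ∀ n : ℕ, 0 < n → n • (WeierstrassCurve.Affine.Point.some _ _ h) ≠ 0 := by
  refine ⟨E4_nonsingular_34_68, ?_⟩
  intro n hn h0
  set P : E4.Point := Point.some _ _ E4_nonsingular_34_68 with hPdef
  have hαP : alpha P = (1, 0) := by
    rw [hPdef, alpha_some, xcl, if_neg (by norm_num : (34:ℚ) ≠ 0), phi_34]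
  have hfin : IsOfFinAddOrder P := isOfFinAddOrder_iff_nsmul_eq_zero.mpr ⟨n, hn, h0⟩
  set d := addOrderOf P with hddef
  have hd0 : 0 < d := hfin.addOrderOf_pos
  have hdP : d • P = 0 := addOrderOf_nsmul_eq_zero P
  have hαd : d • alpha P = 0 := by rw [← alpha_nsmul, hdP, alpha_zero]
  rcases Nat.even_or_odd d with hev | hod
  · -- d even : d = k + k, Q := k • P is a nontrivial 2-torsion point
    obtain ⟨k, hk⟩ := hev
    have hk0 : 0 < k := by omega
    have hQne : k • P ≠ 0 := by
      intro hQ0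
      have hdvd : d ∣ k := addOrderOf_dvd_of_nsmul_eq_zero hQ0
      have := Nat.le_of_dvd hk0 hdvd
      omega
    have hQ2 : k • P + k • P = 0 := by
      rw [← add_nsmul, ← hk, hdP]
    have hαQ : alpha (k • P) = k • alpha P := alpha_nsmul k P
    -- analyze Q
    cases hQc : (k • P) with
    | zero => exact hQne (by rw [hQc]; rfl)
    | @some x y hns =>
      rw [hQc] at hQ2 hαQ
      have hy0 : y = E4.negY x y := by
        by_contra hyn
        rw [Point.add_of_Y_ne hyn] at hQ2
        exact Point.some_ne_zero _ hQ2
      rw [E4_negY] at hy0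
      have hy : y = 0 := by linarith
      have he : y ^ 2 = x ^ 3 - 1020 * x := E4_equation hns.1
      rw [hy] at he
      have hxx : x * (x ^ 2 - 1020) = 0 := by linarith [he]
      rcases mul_eq_zero.mp hxx with hx0 | hx1020
      · -- Q = (0,0) : alpha Q = (1,1), but k • (1,0) ∈ {0,(1,0)}
        rw [alpha_some, xcl, if_pos hx0, phi_neg1020] at hαQ
        rw [hαP, nsmul_char2] at hαQ
        rcases Nat.even_or_odd k with h | h
        · rw [if_pos (Nat.even_iff.mp h)] at hαQ
          exact absurd hαQ (by decide)
        · rw [if_neg (by have := Nat.odd_iff.mp h; omega)] at hαQ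
          exact absurd hαQ (by decide)
      · -- x² = 1020 is impossible
        have hx2 : x ^ 2 = 1020 := by linarith
        have hxne : x ≠ 0 := by
          intro h0
          rw [h0] at hx2
          norm_num at hx2
        have : phi 1020 = 0 := by rw [← hx2, phi_sq hxne]
        rw [phi_1020] at this
        exact absurd this (by decide)
  · -- d odd : alpha P = d • alpha P = 0, contradiction
    have : d • alpha P = alpha P := by
      rw [nsmul_char2, if_neg (by have := Nat.odd_iff.mp hod; omega)]
    rw [this, hαP] at hαd
    exact absurd hαd (by decide)
end

section
/- The group of rational points of the Weierstrass elliptic curve over ℚ given by y² = x³ − 1020x is infinite (equivalently, this curve has positive Mordell–Weil rank). -/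
/-- The Weierstrass elliptic curve `y² = x³ − 1020x` over `ℚ`. -/
def E5 : WeierstrassCurve.Affine ℚ :=
  { a₁ := 0, a₂ := 0, a₃ := 0, a₄ := -1020, a₆ := 0 }

open WeierstrassCurve.Affine

lemma val2_nat_odd (n : ℕ) (h : ¬ 2 ∣ n) : padicValRat 2 ((n : ℕ) : ℚ) = 0 := by
  rw [padicValRat.of_nat, padicValNat.eq_zero_of_not_dvd h]
  simp

lemma val2_two_pow (k : ℕ) : padicValRat 2 ((2:ℚ)^k) = k := by
  rw [padicValRat.pow (q := (2:ℚ))]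
  have : padicValRat 2 ((2:ℕ):ℚ) = 1 := padicValRat.self (by norm_num)
  norm_num at this
  rw [this]; ring

lemma val2_1020 : padicValRat 2 (1020 : ℚ) = 2 := by
  have h255 : padicValRat 2 (255 : ℚ) = 0 := by
    have := val2_nat_odd 255 (by decide); norm_num at this; exact this
  have : (1020 : ℚ) = (2:ℚ)^2 * 255 := by norm_num
  rw [this, padicValRat.mul (by norm_num) (by norm_num), val2_two_pow, h255]
  norm_num

/-- Key valuation computation for doubling. -/
lemma key_val {x y : ℚ} (heq : y ^ 2 = x ^ 3 - 1020 * x) {m : ℤ} (hm : 1 ≤ m)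
    (hx : padicValRat 2 x = -(2 * m)) :
    y ≠ 0 ∧ padicValRat 2 (((3 * x ^ 2 - 1020) / (2 * y)) ^ 2 - 2 * x) = -(2 * (m + 1)) := by
  have hx0 : x ≠ 0 := by
    intro h; rw [h, padicValRat.zero] at hx; omega
  have hvx3 : padicValRat 2 (x ^ 3) = -(6 * m) := by
    rw [padicValRat.pow x, hx]; ring
  have hv1020x : padicValRat 2 (-(1020 * x)) = 2 - 2 * m := by
    rw [padicValRat.neg, padicValRat.mul (by norm_num) hx0, val2_1020, hx]; ring
  have hy0 : y ≠ 0 := by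
    intro h
    rw [h] at heq
    have hx2 : x ^ 2 = 1020 := by
      have h2 : x * (x ^ 2 - 1020) = 0 := by linear_combination -heq
      rcases mul_eq_zero.1 h2 with h3 | h3
      · exact absurd h3 hx0
      · linarith [sub_eq_zero.1 h3]
    have := congrArg (padicValRat 2) hx2
    rw [padicValRat.pow x, hx, val2_1020] at this
    omega
  have hvy : padicValRat 2 y = -(3 * m) := by
    have hsum : x ^ 3 + -(1020 * x) ≠ 0 := by
      intro h
      apply pow_ne_zero 2 hy0
      rw [heq]; linear_combination h
    have := padicValRat.add_eq_of_lt (p := 2) hsum (pow_ne_zero 3 hx0)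
      (by simp [hx0]) (by rw [hvx3, hv1020x]; omega)
    rw [hvx3] at this
    have h2 : padicValRat 2 (y ^ 2) = -(6 * m) := by
      rw [heq, sub_eq_add_neg]; exact this
    rw [padicValRat.pow y] at h2
    omega
  refine ⟨hy0, ?_⟩
  -- valuation of the numerator 3x² - 1020
  have hv3x2 : padicValRat 2 (3 * x ^ 2) = -(4 * m) := by
    have h3 : padicValRat 2 (3 : ℚ) = 0 := by
      have := val2_nat_odd 3 (by decide); norm_num at this; exact this
    rw [padicValRat.mul (by norm_num) (pow_ne_zero 2 hx0), h3, padicValRat.pow x, hx]; ring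
  have hnum0 : 3 * x ^ 2 - 1020 ≠ 0 := by
    intro h
    have h2 : 3 * x ^ 2 = (1020 : ℚ) := by linarith [sub_eq_zero.1 h]
    have := congrArg (padicValRat 2) h2
    rw [hv3x2, val2_1020] at this; omega
  have hvnum : padicValRat 2 (3 * x ^ 2 - 1020) = -(4 * m) := by
    rw [sub_eq_add_neg]
    have := padicValRat.add_eq_of_lt (p := 2) (by rw [← sub_eq_add_neg]; exact hnum0)
      (by positivity) (by norm_num)
      (by rw [hv3x2, padicValRat.neg, val2_1020]; omega)
    rw [hv3x2] at this; exact this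
  have hv2y : padicValRat 2 (2 * y) = 1 - 3 * m := by
    have h2 : padicValRat 2 (2 : ℚ) = 1 := by
      have := val2_two_pow 1; norm_num at this; exact this
    rw [padicValRat.mul (by norm_num) hy0, h2, hvy]; ring
  set L : ℚ := (3 * x ^ 2 - 1020) / (2 * y) with hL
  have hL0 : L ≠ 0 := div_ne_zero hnum0 (mul_ne_zero (by norm_num) hy0)
  have hvL : padicValRat 2 L = -(m + 1) := by
    rw [hL, padicValRat.div (p := 2) hnum0 (mul_ne_zero (by norm_num) hy0), hvnum, hv2y]; omega
  have hvL2 : padicValRat 2 (L ^ 2) = -(2 * m + 2) := by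
    rw [padicValRat.pow L, hvL]; ring
  have hv2x : padicValRat 2 (-(2 * x)) = 1 - 2 * m := by
    have h2 : padicValRat 2 (2 : ℚ) = 1 := by
      have := val2_two_pow 1; norm_num at this; exact this
    rw [padicValRat.neg, padicValRat.mul (by norm_num) hx0, h2, hx]; ring
  have hres0 : L ^ 2 + -(2 * x) ≠ 0 := by
    intro h
    have h2 : L ^ 2 = 2 * x := by linarith [add_eq_zero_iff_eq_neg.1 h]
    have := congrArg (padicValRat 2) h2
    rw [hvL2, ← padicValRat.neg (2 * x), hv2x] at this; omega
  have := padicValRat.add_eq_of_lt (p := 2) hres0 (pow_ne_zero 2 hL0)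
    (by simp [hx0]) (by rw [hvL2, hv2x]; omega)
  rw [hvL2] at this
  rw [sub_eq_add_neg]
  rw [this]; ring

/-- Doubling a point with 2-adic valuation of x equal to -2m gives valuation -2(m+1). -/
lemma key_pt {x y : ℚ} (h : E5.Nonsingular x y) {m : ℤ} (hm : 1 ≤ m)
    (hx : padicValRat 2 x = -(2 * m)) :
    ∃ (x' y' : ℚ) (h' : E5.Nonsingular x' y'),
      Point.some _ _ h + Point.some _ _ h = Point.some _ _ h' ∧
        padicValRat 2 x' = -(2 * (m + 1)) := by
  have heq : y ^ 2 = x ^ 3 - 1020 * x := by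
    have := (E5.equation_iff x y).1 h.1
    simp only [E5] at this
    linarith
  obtain ⟨hy0, hval⟩ := key_val heq hm hx
  have hy : y ≠ E5.negY x y := by
    simp only [WeierstrassCurve.Affine.negY, E5]
    intro hcon
    apply hy0
    linarith
  refine ⟨_, _, _, Point.add_self_of_Y_ne hy, ?_⟩
  have hxeq : E5.addX x x (E5.slope x x y y) = ((3 * x ^ 2 - 1020) / (2 * y)) ^ 2 - 2 * x := by
    rw [slope_of_Y_ne rfl hy]
    simp only [WeierstrassCurve.Affine.addX, WeierstrassCurve.Affine.negY, E5]
    ring_nf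
  rw [hxeq]
  exact hval

noncomputable def Qseq : ℕ → E5.Point
  | 0 => Point.some _ _ (show E5.Nonsingular (276856321 / 4129024) (-4050481038079 / 8390176768) by
      rw [nonsingular_iff, equation_iff]
      constructor
      · norm_num [E5]
      · right
        norm_num [E5])
  | (k + 1) => Qseq k + Qseq k

lemma Qseq_spec (k : ℕ) : ∃ (x y : ℚ) (h : E5.Nonsingular x y),
    Qseq k = Point.some _ _ h ∧ padicValRat 2 x = -(2 * (4 + k)) := by
  induction k with
  | zero =>
      refine ⟨_, _, _, rfl, ?_⟩
      have h16129 : padicValRat 2 (16129 : ℚ) = 0 := by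
        have := val2_nat_odd 16129 (by decide); norm_num at this; exact this
      have hnum : padicValRat 2 (276856321 : ℚ) = 0 := by
        have := val2_nat_odd 276856321 (by decide); norm_num at this; exact this
      have hx : (276856321 / 4129024 : ℚ) = 276856321 / ((2:ℚ)^8 * 16129) := by norm_num
      rw [hx, padicValRat.div (by norm_num) (by norm_num),
        padicValRat.mul (by norm_num) (by norm_num), hnum, val2_two_pow, h16129]
      norm_num
  | succ k ih =>
      obtain ⟨x, y, h, hQ, hv⟩ := ih
      obtain ⟨x', y', h', hadd, hv'⟩ := key_pt h (by omega : (1:ℤ) ≤ 4 + k) (by rw [hv])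
      refine ⟨x', y', h', ?_, ?_⟩
      · show Qseq k + Qseq k = _
        rw [hQ, hadd]
      · rw [hv']; push_cast; ring

/-- The group of rational points of the Weierstrass elliptic curve
`y² = x³ − 1020x` over `ℚ` is infinite. -/
theorem stmt_5 : Infinite E5.Point := by
  -- x-coordinate function
  refine Infinite.of_injective Qseq ?_
  intro j k hjk
  obtain ⟨xj, yj, hj, hQj, hvj⟩ := Qseq_spec j
  obtain ⟨xk, yk, hk, hQk, hvk⟩ := Qseq_spec k
  rw [hQj, hQk] at hjk
  rw [Point.some.injEq] at hjk
  have : padicValRat 2 xj = padicValRat 2 xk := by rw [hjk.1]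
  rw [hvj, hvk] at this
  omega
end

section
/- The set of pairs (u, v) of rational numbers satisfying v² = u⁴ + 255 is infinite. (This is the specialization t = 2 of the curve v² = u⁴ + t⁸ − 1 from the paper's Lemma 3.1; note t⁸ − 1 = 255 when t = 2, and (u, v) = (1, 16) is one solution.) -/
/-- Sequence of points on `v² = u⁴ + 255`, obtained by repeated duplication. -/
private def W : ℕ → ℚ × ℚ
  | 0 => (-127/16, 16639/256)
  | n + 1 =>
    let u := (W n).1
    let v := (W n).2
    ((u ^ 4 - 255) / (2 * u * v), (u ^ 8 + 1530 * u ^ 4 + 65025) / (4 * u ^ 2 * v ^ 2))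

private lemma padic255 : padicValRat 2 (255 : ℚ) = 0 := by
  have : ((255 : ℤ) : ℚ) = (255 : ℚ) := by norm_num
  rw [← this, padicValRat.of_int]
  norm_num [padicValInt, padicValNat.eq_zero_of_not_dvd (by norm_num : ¬ (2 ∣ 255))]

private lemma W_key : ∀ n : ℕ, (W n).2 ^ 2 = (W n).1 ^ 4 + 255 ∧ (W n).1 ≠ 0 ∧
    padicValRat 2 (W n).1 = -(4 + n) := by
  intro n
  induction n with
  | zero =>
    refine ⟨by norm_num [W], by norm_num [W], ?_⟩
    show padicValRat 2 (-127/16) = -4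
    rw [padicValRat.div (by norm_num) (by norm_num), padicValRat.neg]
    have h127 : padicValRat 2 ((127 : ℚ)) = 0 := by
      have : ((127 : ℤ) : ℚ) = (127 : ℚ) := by norm_num
      rw [← this, padicValRat.of_int]
      norm_num [padicValInt, padicValNat.eq_zero_of_not_dvd (by norm_num : ¬ (2 ∣ 127))]
    have h16 : padicValRat 2 ((16 : ℚ)) = 4 := by
      have : ((16 : ℚ)) = (2 : ℚ) ^ 4 := by norm_num
      have h2 : padicValRat 2 (2 : ℚ) = 1 := by
        simpa using padicValRat.self (p := 2) (by norm_num)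
      rw [this, padicValRat.pow (2 : ℚ), h2]; ring
    rw [h127, h16]; ring
  | succ n ih =>
    obtain ⟨heq, hu, hval⟩ := ih
    set u := (W n).1 with hudef
    set v := (W n).2 with hvdef
    -- v ≠ 0
    have hv : v ≠ 0 := by
      intro h
      rw [h] at heq
      nlinarith [pow_nonneg (sq_nonneg u) 2, sq_nonneg (u ^ 2)]
    -- valuation of u^4
    have hu4 : padicValRat 2 (u ^ 4) = -(16 + 4 * n) := by
      rw [padicValRat.pow u, hval]; push_cast; ring
    have hu4ne : (u ^ 4 : ℚ) ≠ 0 := pow_ne_zero _ hu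
    have hu4lt : padicValRat 2 (u ^ 4) < padicValRat 2 (255 : ℚ) := by
      rw [hu4, padic255]; omega
    -- valuation of v : 2 * val v = val (v^2) = val (u^4 + 255) = val u^4
    have hadd : (u ^ 4 + 255 : ℚ) ≠ 0 := by positivity
    have hvval : padicValRat 2 v = -(8 + 2 * n) := by
      have h1 : padicValRat 2 (v ^ 2) = -(16 + 4 * n) := by
        rw [heq, padicValRat.add_eq_of_lt hadd hu4ne (by norm_num) hu4lt, hu4]
      rw [padicValRat.pow v] at h1
      omega
    -- u^4 - 255 ≠ 0 and its valuation
    have hsublt : padicValRat 2 (u ^ 4) < padicValRat 2 (-255 : ℚ) := by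
      rw [padicValRat.neg, padic255, hu4]; omega
    have hsubne : (u ^ 4 - 255 : ℚ) ≠ 0 := by
      intro h
      have h4 : (u ^ 4 : ℚ) = 255 := by linarith
      rw [h4, padic255] at hu4
      omega
    have hsubval : padicValRat 2 (u ^ 4 - 255) = -(16 + 4 * n) := by
      have : (u ^ 4 - 255 : ℚ) = u ^ 4 + (-255) := by ring
      rw [this, padicValRat.add_eq_of_lt (by rw [← this]; exact hsubne) hu4ne
        (by norm_num) hsublt, hu4]
    -- denominator
    have hden : (2 * u * v : ℚ) ≠ 0 := by
      simp [hu, hv]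
    have hdenval : padicValRat 2 (2 * u * v) = -(11 + 3 * n) := by
      have h2 : padicValRat 2 (2 : ℚ) = 1 := by
        simpa using padicValRat.self (p := 2) (by norm_num)
      rw [padicValRat.mul (by simp [hu]) hv, padicValRat.mul (by norm_num) hu,
        h2, hval, hvval]
      ring
    -- the new point
    have hW : W (n + 1) = ((u ^ 4 - 255) / (2 * u * v),
        (u ^ 8 + 1530 * u ^ 4 + 65025) / (4 * u ^ 2 * v ^ 2)) := rfl
    refine ⟨?_, ?_, ?_⟩
    · rw [hW]
      field_simp
      linear_combination (-65280 * u ^ 4 * (v ^ 2 + u ^ 4 + 255)) * heq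
    · rw [hW]
      exact div_ne_zero hsubne hden
    · rw [hW]
      show padicValRat 2 ((u ^ 4 - 255) / (2 * u * v)) = _
      rw [padicValRat.div hsubne hden, hsubval, hdenval]
      push_cast; ring

/-- The set of pairs `(u, v)` of rational numbers satisfying `v² = u⁴ + 255`
is infinite. -/
theorem stmt_6 : {p : ℚ × ℚ | p.2 ^ 2 = p.1 ^ 4 + 255}.Infinite := by
  refine Set.infinite_of_injective_forall_mem (f := W) ?_ ?_
  · intro m m' h
    have hm := (W_key m).2.2
    have hm' := (W_key m').2.2
    rw [h] at hm
    rw [hm] at hm'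
    omega
  · intro n
    exact (W_key n).1
end

section
/- Let f ∈ ℚ[t, u, v] be a polynomial in three variables. If f(t₀, u₀, v₀) = 0 for every triple of rational numbers (t₀, u₀, v₀) with v₀² = u₀⁴ + t₀⁸ − 1, then the polynomial v² − u⁴ − t⁸ + 1 divides f in ℚ[t, u, v]. (This expresses the Zariski density of the rational points on the surface Y from the m = 4 case of the paper's Example 4.3, whose affine model is v² = u⁴ + t⁸ − 1.) -/
namespace Stmt8Aux

open Polynomial

noncomputable section

abbrev Qt := Polynomial ℚ

/-- One step of the Euler addition (adding the base point `(1, t⁴)`) on the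
Jacobi quartic `Y² = 1 + (t⁸-1)X⁴`, in projective coordinates
`X = A/D`, `Y = B/D²`. -/
def stA (A B D : Qt) : Qt := A * X^4 * D + B
def stB (A B D : Qt) : Qt :=
  B * X^4 * (D^2 + (X^8 - 1) * A^2) + 2*(X^8-1)*A*D*(A^2 + D^2)
def stD (A B D : Qt) : Qt := D^2 - (X^8-1)*A^2

def step (p : Qt × Qt × Qt) : Qt × Qt × Qt :=
  (stA p.1 p.2.1 p.2.2, stB p.1 p.2.1 p.2.2, stD p.1 p.2.1 p.2.2)

def pt : ℕ → Qt × Qt × Qt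
  | 0 => (1, X^4, 1)
  | n+1 => step (pt n)

lemma pt_succ (n : ℕ) : pt (n+1) = step (pt n) := rfl

/-- The curve identity propagates through the addition step (Euler's identity). -/
lemma curve_step (A B D : Qt) (h : B^2 = D^4 + (X^8-1)*A^4) :
    (stB A B D)^2 = (stD A B D)^4 + (X^8-1)*(stA A B D)^4 := by
  unfold stA stB stD
  linear_combination (-(D^4*(X^8-1)) + D^4*X^8 - B^2*(X^8-1) - 4*A*B*D*X^4*(X^8-1)
      - 4*A^2*D^2*X^8*(X^8-1) - A^4*(X^8-1)^2 + A^4*X^8*(X^8-1)^2) * h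

lemma curve_pt (n : ℕ) : (pt n).2.1^2 = (pt n).2.2^4 + (X^8-1)*(pt n).1^4 := by
  induction n with
  | zero =>
      show (X^4 : Qt)^2 = (1:Qt)^4 + (X^8-1)*1^4
      ring
  | succ n ih =>
      rw [pt_succ]
      exact curve_step _ _ _ ih

set_option maxHeartbeats 4000000 in
lemma stepOE (A B D : Qt) (ι σ lam : ℚ) (hσ : σ^2 = 1)
    (a1 d1 b1 : Qt)
    (hA : A = C σ * C lam + a1*X^8) (hD : D = C lam + d1*X^8)
    (hB : B = C σ * C (2*ι+1) * C lam^2 * X^4 + b1*X^12) :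
    ∃ a2 d2 b2 : Qt,
      stA A B D = -(C (-σ) * C (ι+1) * C (2*lam^2) * X^4) + a2*X^12 ∧
      stD A B D = C (2*lam^2) + d2*X^8 ∧
      stB A B D = C (-σ) * C (2*lam^2)^2 + b2*X^8 := by
  have hs : (C σ : Qt)^2 = 1 := by rw [← map_pow, hσ, map_one]
  subst hA hD hB
  refine ⟨(1*b1 + 1*d1*(C σ)*(C lam) + 1*a1*(C lam) + 1*X^8*a1*d1), ((-1)*(C lam)^2 + 2*d1*(C lam) + 2*a1*(C σ)*(C lam) + 1*X^8*d1^2 + (-2)*X^8*a1*(C σ)*(C lam) + 1*X^8*a1^2 + (-1)*X^16*a1^2), (4*(C σ)*(C lam)^4 + (-8)*d1*(C σ)*(C lam)^3 + (-8)*a1*(C lam)^3 + 1*X^8*(C σ)*(C lam)^4 + 2*X^8*(C σ)*(C lam)^4*(C ι) + 10*X^8*d1*(C σ)*(C lam)^3 + 4*X^8*d1*(C σ)*(C lam)^3*(C ι) + (-6)*X^8*d1^2*(C σ)*(C lam)^2 + 6*X^8*a1*(C lam)^3 + (-4)*X^8*a1*(C lam)^3*(C ι) + (-12)*X^8*a1*d1*(C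 lam)^2 + (-6)*X^8*a1^2*(C σ)*(C lam)^2 + 1*X^16*b1*(C lam)^2 + 2*X^16*d1*b1*(C lam) + 7*X^16*d1^2*(C σ)*(C lam)^2 + 2*X^16*d1^2*(C σ)*(C lam)^2*(C ι) + (-2)*X^16*d1^3*(C σ)*(C lam) + 2*X^16*a1*(C lam)^3 + 4*X^16*a1*(C lam)^3*(C ι) + (-2)*X^16*a1*b1*(C σ)*(C lam) + 12*X^16*a1*d1*(C lam)^2 + (-6)*X^16*a1*d1^2*(C lam) + 5*X^16*a1^2*(C σ)*(C lam)^2 + (-2)*X^16*a1^2*(C σ)*(C lam)^2*(C ι) + (-6)*X^16*a1^2*d1*(C σ)*(C lam) + (-2)*X^16*a1^3*(C lam) + 1*X^24*d1^2*b1 + 2*X^24*d1^3*(C σ)*(C lam) + 2*X^24*a1*b1*(C σ)*(C lam) + 6*X^24*a1*d1^2*(C lam) + (-2)*X^24*a1*d1^3 + 1*X^24*a1^2*(C σ)*(C lam)^2 + 2*X^24*a1^2*(C σ)*(C lam)^2*(C ι) + (-1)*X^24*a1^2*b1 + 6*X^24*a1^2*d1*(C σ)*(C lam) + 2*X^24*a1^3*(C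 lam) + (-2)*X^24*a1^3*d1 + 2*X^32*a1*d1^3 + 1*X^32*a1^2*b1 + 2*X^32*a1^3*d1), ?_, ?_, ?_⟩
  · unfold stA
    simp only [map_neg, map_add, map_mul, map_pow, map_ofNat, map_one]
    ring
  · unfold stD
    simp only [map_neg, map_add, map_mul, map_pow, map_ofNat, map_one]
    linear_combination ((1*(C lam)^2 + (-1)*X^8*(C lam)^2)) * hs
  · unfold stB
    simp only [map_neg, map_add, map_mul, map_pow, map_ofNat, map_one]
    linear_combination (((-2)*(C σ)*(C lam)^4 + 1*X^8*(C σ)*(C lam)^4 + (-2)*X^8*(C σ)*(C lam)^4*(C ι) + (-2)*X^8*d1*(C σ)*(C lam)^3 + (-6)*X^8*a1*(C lam)^3 + 1*X^16*(C σ)*(C lam)^4 + 2*X^16*(C σ)*(C lam)^4*(C ι) + (-1)*X^16*b1*(C lam)^2 + 2*X^16*d1*(C σ)*(C lam)^3 + 4*X^16*a1*(C lam)^3 + (-4)*X^16*a1*(C lam)^3*(C ι) + (-6)*X^16*a1*d1*(C lam)^2 + 1*X^24*b1*(C lam)^2 + 2*X^24*a1*(C lam)^3 + 4*X^24*a1*(C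 lam)^3*(C ι) + 6*X^24*a1*d1*(C lam)^2)) * hs

set_option maxHeartbeats 4000000 in
lemma stepEO (A B D : Qt) (ι σ lam : ℚ) (hσ : σ^2 = 1)
    (a1 d1 b1 : Qt)
    (hA : A = -(C σ * C ι * C lam * X^4) + a1*X^12) (hD : D = C lam + d1*X^8)
    (hB : B = C σ * C lam^2 + b1*X^8) :
    ∃ a2 d2 b2 : Qt,
      stA A B D = C σ * C (lam^2) + a2*X^8 ∧
      stD A B D = C (lam^2) + d2*X^8 ∧
      stB A B D = C σ * C (2*ι+1) * C (lam^2)^2 * X^4 + b2*X^12 := by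
  have hs : (C σ : Qt)^2 = 1 := by rw [← map_pow, hσ, map_one]
  subst hA hD hB
  refine ⟨((-1)*(C σ)*(C lam)^2*(C ι) + 1*b1 + (-1)*X^8*d1*(C σ)*(C lam)*(C ι) + 1*X^8*a1*(C lam) + 1*X^16*a1*d1), (1*(C lam)^2*(C ι)^2 + 2*d1*(C lam) + (-1)*X^8*(C lam)^2*(C ι)^2 + 1*X^8*d1^2 + (-2)*X^8*a1*(C σ)*(C lam)*(C ι) + 2*X^16*a1*(C σ)*(C lam)*(C ι) + 1*X^16*a1^2 + (-1)*X^24*a1^2), ((-2)*(C σ)*(C lam)^4*(C ι) + (-1)*(C σ)*(C lam)^4*(C ι)^2 + 2*(C σ)*(C lam)^4*(C ι)^3 + 1*b1*(C lam)^2 + 2*d1*(C σ)*(C lam)^3 + 6*d1*(C σ)*(C lam)^3*(C ι) + (-2)*a1*(C lam)^3 + 1*X^8*(C σ)*(C lam)^4*(C ι)^2 + (-2)*X^8*(C σ)*(C lam)^4*(C ι)^3 + (-1)*X^8*b1*(C lam)^2*(C ι)^2 + (-6)*X^8*d1*(C σ)*(C lam)^3*(C ι) + 2*X^8*d1*(C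 σ)*(C lam)^3*(C ι)^3 + 2*X^8*d1*b1*(C lam) + 1*X^8*d1^2*(C σ)*(C lam)^2 + 6*X^8*d1^2*(C σ)*(C lam)^2*(C ι) + 2*X^8*a1*(C lam)^3 + 2*X^8*a1*(C lam)^3*(C ι) + (-6)*X^8*a1*(C lam)^3*(C ι)^2 + (-6)*X^8*a1*d1*(C lam)^2 + 1*X^16*b1*(C lam)^2*(C ι)^2 + (-2)*X^16*d1*(C σ)*(C lam)^3*(C ι)^3 + (-6)*X^16*d1^2*(C σ)*(C lam)^2*(C ι) + 1*X^16*d1^2*b1 + 2*X^16*d1^3*(C σ)*(C lam)*(C ι) + (-2)*X^16*a1*(C lam)^3*(C ι) + 6*X^16*a1*(C lam)^3*(C ι)^2 + 2*X^16*a1*b1*(C σ)*(C lam)*(C ι) + 6*X^16*a1*d1*(C lam)^2 + (-6)*X^16*a1*d1*(C lam)^2*(C ι)^2 + (-6)*X^16*a1*d1^2*(C lam) + (-1)*X^16*a1^2*(C σ)*(C lam)^2 + 6*X^16*a1^2*(C σ)*(C lam)^2*(C ι) + (-2)*X^24*d1^3*(C σ)*(C lam)*(C ι) + (-2)*X^24*a1*b1*(C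 σ)*(C lam)*(C ι) + 6*X^24*a1*d1*(C lam)^2*(C ι)^2 + 6*X^24*a1*d1^2*(C lam) + (-2)*X^24*a1*d1^3 + 1*X^24*a1^2*(C σ)*(C lam)^2 + (-6)*X^24*a1^2*(C σ)*(C lam)^2*(C ι) + (-1)*X^24*a1^2*b1 + 6*X^24*a1^2*d1*(C σ)*(C lam)*(C ι) + (-2)*X^24*a1^3*(C lam) + 2*X^32*a1*d1^3 + 1*X^32*a1^2*b1 + (-6)*X^32*a1^2*d1*(C σ)*(C lam)*(C ι) + 2*X^32*a1^3*(C lam) + (-2)*X^32*a1^3*d1 + 2*X^40*a1^3*d1), ?_, ?_, ?_⟩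
  · unfold stA
    simp only [map_neg, map_add, map_mul, map_pow, map_ofNat, map_one]
    ring
  · unfold stD
    simp only [map_neg, map_add, map_mul, map_pow, map_ofNat, map_one]
    linear_combination ((1*X^8*(C lam)^2*(C ι)^2 + (-1)*X^16*(C lam)^2*(C ι)^2)) * hs
  · unfold stB
    simp only [map_neg, map_add, map_mul, map_pow, map_ofNat, map_one]
    linear_combination (((-1)*X^12*(C σ)*(C lam)^4*(C ι)^2 + 2*X^12*(C σ)*(C lam)^4*(C ι)^3 + 1*X^20*(C σ)*(C lam)^4*(C ι)^2 + (-2)*X^20*(C σ)*(C lam)^4*(C ι)^3 + (-1)*X^20*b1*(C lam)^2*(C ι)^2 + 2*X^20*d1*(C σ)*(C lam)^3*(C ι)^3 + 2*X^20*a1*(C lam)^3*(C ι) + (-6)*X^20*a1*(C lam)^3*(C ι)^2 + 1*X^28*b1*(C lam)^2*(C ι)^2 + (-2)*X^28*d1*(C σ)*(C lam)^3*(C ι)^3 + (-2)*X^28*a1*(C lam)^3*(C ι) + 6*X^28*a1*(C lam)^3*(C ι)^2 + (-6)*X^28*a1*d1*(C lam)^2*(C ι)^2 + 6*X^36*a1*d1*(C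 lam)^2*(C ι)^2)) * hs


/-- Master induction: Laurent-type data of the sections at `t = 0`. -/
lemma inv (j : ℕ) :
    (∃ σ lam : ℚ, ∃ a1 d1 b1 : Qt, (σ = 1 ∨ σ = -1) ∧ 0 < lam ∧
       (pt (2*j)).1 = C σ * C lam + a1*X^8 ∧
       (pt (2*j)).2.2 = C lam + d1*X^8 ∧
       (pt (2*j)).2.1 = C σ * C (2*(j:ℚ)+1) * C lam^2 * X^4 + b1*X^12)
  ∧ (∃ σ lam : ℚ, ∃ a1 d1 b1 : Qt, (σ = 1 ∨ σ = -1) ∧ 0 < lam ∧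
       (pt (2*j+1)).1 = -(C σ * C ((j:ℚ)+1) * C lam * X^4) + a1*X^12 ∧
       (pt (2*j+1)).2.2 = C lam + d1*X^8 ∧
       (pt (2*j+1)).2.1 = C σ * C lam^2 + b1*X^8) := by
  induction j with
  | zero =>
      constructor
      · refine ⟨1, 1, 0, 0, 0, Or.inl rfl, one_pos, ?_, ?_, ?_⟩
        · show (1:Qt) = C 1 * C 1 + 0*X^8
          simp
        · show (1:Qt) = C 1 + 0*X^8
          simp
        · show (X^4:Qt) = C 1 * C (2*((0:ℕ):ℚ)+1) * C 1^2 * X^4 + 0*X^12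
          norm_num
      · -- pt 1 from pt 0 via stepOE
        have h0A : (pt 0).1 = C (1:ℚ) * C (1:ℚ) + 0*X^8 := by
          show (1:Qt) = C 1 * C 1 + 0*X^8; simp
        have h0D : (pt 0).2.2 = C (1:ℚ) + 0*X^8 := by
          show (1:Qt) = C 1 + 0*X^8; simp
        have h0B : (pt 0).2.1 = C (1:ℚ) * C (2*((0:ℕ):ℚ)+1) * C (1:ℚ)^2 * X^4 + 0*X^12 := by
          show (X^4:Qt) = C 1 * C (2*((0:ℕ):ℚ)+1) * C 1^2 * X^4 + 0*X^12; norm_num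
        obtain ⟨a2, d2, b2, hA, hD, hB⟩ :=
          stepOE (pt 0).1 (pt 0).2.1 (pt 0).2.2 ((0:ℕ):ℚ) 1 1 (by norm_num) 0 0 0 h0A h0D h0B
        refine ⟨-1, 2*1^2, a2, d2, b2, Or.inr rfl, by norm_num, ?_, ?_, ?_⟩
        · show (step (pt 0)).1 = _
          rw [show (step (pt 0)).1 = stA (pt 0).1 (pt 0).2.1 (pt 0).2.2 from rfl, hA]
        · show (step (pt 0)).2.2 = _
          rw [show (step (pt 0)).2.2 = stD (pt 0).1 (pt 0).2.1 (pt 0).2.2 from rfl, hD]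
        · show (step (pt 0)).2.1 = _
          rw [show (step (pt 0)).2.1 = stB (pt 0).1 (pt 0).2.1 (pt 0).2.2 from rfl, hB]
  | succ j ih =>
      obtain ⟨σ, lam, a1, d1, b1, hσ, hlam, hA, hD, hB⟩ := ih.2
      have hσ2 : σ^2 = 1 := by rcases hσ with rfl | rfl <;> norm_num
      -- part 1 : pt (2*(j+1)) = step (pt (2*j+1))
      have hidx : 2*(j+1) = (2*j+1)+1 := by ring
      obtain ⟨a2, d2, b2, hA2, hD2, hB2⟩ :=
        stepEO (pt (2*j+1)).1 (pt (2*j+1)).2.1 (pt (2*j+1)).2.2 ((j:ℚ)+1) σ lam hσ2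
          a1 d1 b1 hA hD hB
      have part1 : ∃ σ' lam' : ℚ, ∃ a1' d1' b1' : Qt, (σ' = 1 ∨ σ' = -1) ∧ 0 < lam' ∧
          (pt (2*(j+1))).1 = C σ' * C lam' + a1'*X^8 ∧
          (pt (2*(j+1))).2.2 = C lam' + d1'*X^8 ∧
          (pt (2*(j+1))).2.1 = C σ' * C (2*((j+1:ℕ):ℚ)+1) * C lam'^2 * X^4 + b1'*X^12 := by
        refine ⟨σ, lam^2, a2, d2, b2, hσ, by positivity, ?_, ?_, ?_⟩
        · rw [hidx, pt_succ]
          exact hA2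
        · rw [hidx, pt_succ]
          exact hD2
        · rw [hidx, pt_succ]
          rw [show (2*((j:ℚ)+1)+1 : ℚ) = 2*((j+1:ℕ):ℚ)+1 by push_cast; ring] at hB2
          exact hB2
      refine ⟨part1, ?_⟩
      -- part 2 : pt (2*(j+1)+1) = step (pt (2*(j+1)))
      obtain ⟨σ', lam', a1', d1', b1', hσ', hlam', hA', hD', hB'⟩ := part1
      have hσ2' : σ'^2 = 1 := by rcases hσ' with rfl | rfl <;> norm_num
      obtain ⟨a3, d3, b3, hA3, hD3, hB3⟩ :=
        stepOE (pt (2*(j+1))).1 (pt (2*(j+1))).2.1 (pt (2*(j+1))).2.2 ((j+1:ℕ):ℚ) σ' lam' hσ2'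
          a1' d1' b1' hA' hD' hB'
      refine ⟨-σ', 2*lam'^2, a3, d3, b3, ?_, by positivity, ?_, ?_, ?_⟩
      · rcases hσ' with rfl | rfl
        · exact Or.inr rfl
        · exact Or.inl (by norm_num)
      · rw [pt_succ]
        exact hA3
      · rw [pt_succ]
        exact hD3
      · rw [pt_succ]
        exact hB3


def αP (k : ℕ) : Qt := (pt (2*k+1)).1
def βP (k : ℕ) : Qt := (pt (2*k+1)).2.1
def δP (k : ℕ) : Qt := (pt (2*k+1)).2.2

lemma evenData (k : ℕ) : ∃ σ lam : ℚ, ∃ a1 d1 b1 : Qt, (σ = 1 ∨ σ = -1) ∧ 0 < lam ∧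
    αP k = -(C σ * C ((k:ℚ)+1) * C lam * X^4) + a1*X^12 ∧
    δP k = C lam + d1*X^8 ∧
    βP k = C σ * C lam^2 + b1*X^8 := (inv k).2

lemma curveP (k : ℕ) : (βP k)^2 = (δP k)^4 + (X^8-1)*(αP k)^4 := curve_pt _

lemma coeff4_lead (c2 : ℚ) (a : Qt) : ((-(C c2*X^4) + a*X^12)).coeff 4 = -c2 := by
  rw [coeff_add, coeff_neg, coeff_C_mul, coeff_X_pow, coeff_mul_X_pow']
  norm_num

lemma coeff0_lead (c2 : ℚ) (b : Qt) : ((C c2 + b*X^8)).coeff 0 = c2 := by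
  rw [coeff_add, coeff_C, coeff_mul_X_pow']
  norm_num

lemma α_ne (k : ℕ) : αP k ≠ 0 := by
  obtain ⟨σ, lam, a1, d1, b1, hσ, hlam, hα, hδ, hβ⟩ := evenData k
  intro h
  have hc : (αP k).coeff 4 = -(σ*((k:ℚ)+1)*lam) := by
    rw [hα, show (C σ * C ((k:ℚ)+1) * C lam : Qt) = C (σ*((k:ℚ)+1)*lam) by
      rw [C_mul, C_mul]]
    exact coeff4_lead _ _
  rw [h] at hc
  simp only [coeff_zero] at hc
  have hk1 : (0:ℚ) < (k:ℚ)+1 := by positivity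
  rcases hσ with rfl | rfl <;> nlinarith
lemma β_ne (k : ℕ) : βP k ≠ 0 := by
  obtain ⟨σ, lam, a1, d1, b1, hσ, hlam, hα, hδ, hβ⟩ := evenData k
  intro h
  have hc : (βP k).coeff 0 = σ*lam^2 := by
    rw [hβ, show (C σ * C lam^2 : Qt) = C (σ*lam^2) by rw [C_mul, C_pow]]
    exact coeff0_lead _ _
  rw [h] at hc
  simp only [coeff_zero] at hc
  rcases hσ with rfl | rfl <;> nlinarith

lemma coeff4_prod (c1 c2 : ℚ) (dd aa : Qt) :
    ((C c1 + dd*X^8) * (-(C c2*X^4) + aa*X^12)).coeff 4 = -(c1*c2) := by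
  have h : (C c1 + dd*X^8) * (-(C c2*X^4) + aa*X^12)
      = -(C (c1*c2) * X^4) + (C c1*aa*X^4 - C c2*dd*X^4 + dd*aa*X^12)*X^8 := by
    rw [C_mul]; ring
  rw [h, coeff_add, coeff_neg, coeff_C_mul, coeff_X_pow, coeff_mul_X_pow']
  norm_num

lemma δα_inj (k l : ℕ) (h : δP k * αP l = δP l * αP k) : k = l := by
  obtain ⟨σk, lamk, a1k, d1k, b1k, hσk, hlamk, hαk, hδk, hβk⟩ := evenData k
  obtain ⟨σl, laml, a1l, d1l, b1l, hσl, hlaml, hαl, hδl, hβl⟩ := evenData l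
  have hαk' : αP k = -(C (σk*((k:ℚ)+1)*lamk)*X^4) + a1k*X^12 := by
    rw [hαk, C_mul, C_mul]
  have hαl' : αP l = -(C (σl*((l:ℚ)+1)*laml)*X^4) + a1l*X^12 := by
    rw [hαl, C_mul, C_mul]
  have h4 := congrArg (fun q => Polynomial.coeff q 4) h
  simp only [hδk, hδl, hαk', hαl', coeff4_prod] at h4
  -- h4 : -(lamk * (σl*((l:ℚ)+1)*laml)) = -(laml * (σk*((k:ℚ)+1)*lamk))
  have hll : (0:ℚ) < lamk*laml := mul_pos hlamk hlaml
  have hkl : (k:ℚ) = (l:ℚ) := by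
    rcases hσk with rfl | rfl <;> rcases hσl with rfl | rfl
    · have h5 : lamk*laml*((k:ℚ)-(l:ℚ)) = 0 := by linear_combination h4
      have h6 : (k:ℚ)-(l:ℚ) = 0 := by
        rcases mul_eq_zero.mp h5 with h' | h'
        · exact absurd h' (ne_of_gt hll)
        · exact h'
      linarith
    · exfalso
      have h5 : lamk*laml*((k:ℚ)+(l:ℚ)+2) = 0 := by linear_combination h4
      have hk0 : (0:ℚ) ≤ (k:ℚ) := Nat.cast_nonneg k
      have hl0 : (0:ℚ) ≤ (l:ℚ) := Nat.cast_nonneg l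
      nlinarith
    · exfalso
      have h5 : lamk*laml*((k:ℚ)+(l:ℚ)+2) = 0 := by linear_combination -h4
      have hk0 : (0:ℚ) ≤ (k:ℚ) := Nat.cast_nonneg k
      have hl0 : (0:ℚ) ≤ (l:ℚ) := Nat.cast_nonneg l
      nlinarith
    · have h5 : lamk*laml*((k:ℚ)-(l:ℚ)) = 0 := by linear_combination -h4
      have h6 : (k:ℚ)-(l:ℚ) = 0 := by
        rcases mul_eq_zero.mp h5 with h' | h'
        · exact absurd h' (ne_of_gt hll)
        · exact h'
      linarith
  exact_mod_cast hkl

/-- The key density lemma: a two-variable polynomial (as an iterated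
polynomial, `t` inner and `u` outer) vanishing at all affine rational points of
the surface with `v₀ ≠ 0` is zero. -/
lemma density (p : Polynomial Qt)
    (hp : ∀ t₀ u₀ v₀ : ℚ, v₀ ≠ 0 → v₀^2 = u₀^4 + t₀^8 - 1 →
      Polynomial.eval₂ (Polynomial.evalRingHom t₀) u₀ p = 0) : p = 0 := by
  by_contra hne
  set d := p.natDegree with hd
  -- Step 1: the cleared-denominator polynomial vanishes identically
  have hQ : ∀ k : ℕ, (∑ i ∈ Finset.range (d+1),
      p.coeff i * δP k^i * αP k^(d-i)) = 0 := by
    intro k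
    apply Polynomial.eq_zero_of_infinite_isRoot
    apply Set.Infinite.mono ?_
      ((Polynomial.finite_setOf_isRoot (mul_ne_zero (α_ne k) (β_ne k))).infinite_compl)
    intro t₀ ht₀
    simp only [Set.mem_compl_iff, Set.mem_setOf_eq, Polynomial.IsRoot,
      Polynomial.eval_mul, mul_eq_zero, not_or] at ht₀
    obtain ⟨hα0, hβ0⟩ := ht₀
    have hcurve := congrArg (Polynomial.eval t₀) (curveP k)
    simp only [Polynomial.eval_pow, Polynomial.eval_mul, Polynomial.eval_add,
      Polynomial.eval_sub, Polynomial.eval_one, Polynomial.eval_X] at hcurve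
    set at₀ := (αP k).eval t₀ with hat
    set dt₀ := (δP k).eval t₀ with hdt
    set bt₀ := (βP k).eval t₀ with hbt
    have hv : (bt₀/at₀^2)^2 = (dt₀/at₀)^4 + t₀^8 - 1 := by
      rw [div_pow, div_pow, ← pow_mul, show 2*2 = 4 from rfl, hcurve]
      field_simp
      ring
    have hpoint := hp t₀ (dt₀/at₀) (bt₀/at₀^2)
      (div_ne_zero hβ0 (pow_ne_zero _ hα0)) hv
    rw [Polynomial.eval₂_eq_sum_range] at hpoint
    show Polynomial.eval t₀ _ = 0
    rw [Polynomial.eval_finset_sum]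
    have : ∀ i ∈ Finset.range (d+1),
        Polynomial.eval t₀ (p.coeff i * δP k^i * αP k^(d-i))
          = ((Polynomial.evalRingHom t₀) (p.coeff i) * (dt₀/at₀)^i) * at₀^d := by
      intro i hi
      have hid : i ≤ d := Nat.lt_succ_iff.mp (Finset.mem_range.mp hi)
      have hsplit : at₀^d = at₀^i * at₀^(d-i) := by
        rw [← pow_add]
        congr 1
        omega
      simp only [Polynomial.eval_mul, Polynomial.eval_pow, Polynomial.coe_evalRingHom]
      rw [div_pow, hsplit]
      field_simp
      ring
    rw [Finset.sum_congr rfl this, ← Finset.sum_mul, hpoint, zero_mul]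
  -- Step 2: every section value is a root over the rational function field
  classical
  set ι : Qt →+* RatFunc ℚ := (algebraMap Qt (RatFunc ℚ) : Qt →+* RatFunc ℚ) with hι
  have hιinj : Function.Injective ι := RatFunc.algebraMap_injective ℚ
  set xs : ℕ → RatFunc ℚ := fun k => ι (δP k) / ι (αP k) with hxs
  have hαι : ∀ k, ι (αP k) ≠ 0 := by
    intro k h
    exact α_ne k (hιinj (by simpa using h))
  have hroot : ∀ k, (p.map ι).IsRoot (xs k) := by
    intro k
    have h0 := congrArg ι (hQ k)
    rw [map_sum] at h0
    simp only [map_mul, map_pow, map_zero] at h0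
    show (p.map ι).eval _ = 0
    have he : (p.map ι).eval (xs k) * (ι (αP k))^d = 0 := by
      rw [Polynomial.eval_eq_sum_range'
        (lt_of_le_of_lt Polynomial.natDegree_map_le (Nat.lt_succ_self d))]
      rw [Finset.sum_mul, ← h0]
      apply Finset.sum_congr rfl
      intro i hi
      have hid : i ≤ d := Nat.lt_succ_iff.mp (Finset.mem_range.mp hi)
      have hsplit : (ι (αP k))^d = (ι (αP k))^i * (ι (αP k))^(d-i) := by
        rw [← pow_add]
        congr 1
        omega
      rw [Polynomial.coeff_map, hxs]
      have hne'' : (ι (αP k))^i ≠ 0 := pow_ne_zero _ (hαι k)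
      simp only []
      rw [div_pow, hsplit]
      field_simp
    exact (mul_eq_zero.mp he).resolve_right (pow_ne_zero _ (hαι k))
  -- Step 3: too many distinct roots
  have hmapne : p.map ι ≠ 0 := (Polynomial.map_ne_zero_iff hιinj).mpr hne
  have hinj : Function.Injective xs := by
    intro k l h
    rw [hxs] at h
    simp only [] at h
    rw [div_eq_div_iff (hαι k) (hαι l)] at h
    exact δα_inj k l (hιinj (by simpa only [map_mul] using h))
  have hsub : (Finset.range (d+1)).image xs ⊆ (p.map ι).roots.toFinset := by
    intro x hx
    obtain ⟨k, -, rfl⟩ := Finset.mem_image.mp hx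
    rw [Multiset.mem_toFinset, Polynomial.mem_roots hmapne]
    exact hroot k
  have hcard : d+1 ≤ ((p.map ι).roots.toFinset).card := by
    have := Finset.card_le_card hsub
    rwa [Finset.card_image_of_injective _ hinj, Finset.card_range] at this
  have h2 : ((p.map ι).roots.toFinset).card ≤ (p.map ι).natDegree :=
    (Multiset.toFinset_card_le _).trans ((p.map ι).card_roots')
  have h3 : (p.map ι).natDegree ≤ d := Polynomial.natDegree_map_le
  omega


/-! ### Glue between `MvPolynomial (Fin 3) ℚ` and `((ℚ[t])[u])[v]` -/

def Ξ : MvPolynomial (Fin 3) ℚ →+* Polynomial (Polynomial Qt) :=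
  (MvPolynomial.aeval (R := ℚ)
    (![Polynomial.C (Polynomial.C Polynomial.X), Polynomial.C Polynomial.X,
      Polynomial.X] : Fin 3 → Polynomial (Polynomial Qt))).toRingHom

def h0 : Qt →+* MvPolynomial (Fin 3) ℚ :=
  Polynomial.eval₂RingHom MvPolynomial.C (MvPolynomial.X 0)
def h1 : Polynomial Qt →+* MvPolynomial (Fin 3) ℚ :=
  Polynomial.eval₂RingHom h0 (MvPolynomial.X 1)
def Ξinv : Polynomial (Polynomial Qt) →+* MvPolynomial (Fin 3) ℚ :=
  Polynomial.eval₂RingHom h1 (MvPolynomial.X 2)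

lemma Ξinv_Ξ (f : MvPolynomial (Fin 3) ℚ) : Ξinv (Ξ f) = f := by
  have h : Ξinv.comp Ξ = RingHom.id (MvPolynomial (Fin 3) ℚ) := by
    apply MvPolynomial.ringHom_ext
    · intro q
      simp [Ξ, Ξinv, h0, h1]
    · intro i
      fin_cases i <;>
        simp [Ξ, Ξinv, h0, h1]
  exact DFunLike.congr_fun h f

lemma evV_Ξ (t₀ u₀ v₀ : ℚ) (f : MvPolynomial (Fin 3) ℚ) :
    Polynomial.eval₂
      (Polynomial.eval₂RingHom (Polynomial.evalRingHom t₀) u₀) v₀ (Ξ f)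
      = MvPolynomial.eval ![t₀, u₀, v₀] f := by
  have h : (Polynomial.eval₂RingHom
        (Polynomial.eval₂RingHom (Polynomial.evalRingHom t₀) u₀) v₀).comp Ξ
      = (MvPolynomial.eval ![t₀, u₀, v₀] : MvPolynomial (Fin 3) ℚ →+* ℚ) := by
    apply MvPolynomial.ringHom_ext
    · intro q
      simp [Ξ]
    · intro i
      fin_cases i <;>
        simp [Ξ]
  exact DFunLike.congr_fun h f

/-- The main auxiliary theorem. -/
theorem main (f : MvPolynomial (Fin 3) ℚ)
    (hf : ∀ t₀ u₀ v₀ : ℚ, v₀ ^ 2 = u₀ ^ 4 + t₀ ^ 8 - 1 →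
      MvPolynomial.eval ![t₀, u₀, v₀] f = 0) :
    ((MvPolynomial.X 2 : MvPolynomial (Fin 3) ℚ) ^ 2 - (MvPolynomial.X 1) ^ 4
      - (MvPolynomial.X 0) ^ 8 + 1) ∣ f := by
  classical
  set W : Polynomial Qt := Polynomial.X^4 + Polynomial.C (Polynomial.X^8 - 1) with hW
  set G : Polynomial (Polynomial Qt) := Polynomial.X^2 - Polynomial.C W with hG
  have hmonic : G.Monic := Polynomial.monic_X_pow_sub_C W (two_ne_zero)
  have hΞG : Ξinv G = (MvPolynomial.X 2 : MvPolynomial (Fin 3) ℚ) ^ 2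
      - (MvPolynomial.X 1) ^ 4 - (MvPolynomial.X 0) ^ 8 + 1 := by
    simp [Ξinv, h1, h0, hG, hW, Polynomial.eval₂_pow, Polynomial.coe_eval₂RingHom]
    ring
  have hdecomp := Polynomial.modByMonic_add_div (Ξ f) G
  -- evaluation of the remainder at surface points
  have hev : ∀ t₀ u₀ v₀ : ℚ, v₀^2 = u₀^4 + t₀^8 - 1 →
      Polynomial.eval₂
        (Polynomial.eval₂RingHom (Polynomial.evalRingHom t₀) u₀) v₀ (Ξ f %ₘ G) = 0 := by
    intro t₀ u₀ v₀ hv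
    have h1' := hf t₀ u₀ v₀ hv
    rw [← evV_Ξ] at h1'
    rw [← hdecomp] at h1'
    rw [Polynomial.eval₂_add, Polynomial.eval₂_mul] at h1'
    have hGv : Polynomial.eval₂
        (Polynomial.eval₂RingHom (Polynomial.evalRingHom t₀) u₀) v₀ G = 0 := by
      rw [hG, Polynomial.eval₂_sub, Polynomial.eval₂_pow, Polynomial.eval₂_X,
        Polynomial.eval₂_C, hW]
      rw [Polynomial.coe_eval₂RingHom, Polynomial.eval₂_add, Polynomial.eval₂_pow,
        Polynomial.eval₂_X, Polynomial.eval₂_C]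
      rw [Polynomial.coe_evalRingHom, Polynomial.eval_sub, Polynomial.eval_pow,
        Polynomial.eval_X, Polynomial.eval_one]
      rw [hv]
      ring
    rw [hGv, zero_mul, add_zero] at h1'
    exact h1'
  -- the remainder is zero
  have hr0 : Ξ f %ₘ G = 0 := by
    by_cases hne : Ξ f %ₘ G = 0
    · exact hne
    · exfalso
      have hdeg : (Ξ f %ₘ G).natDegree ≤ 1 := by
        have hlt := Polynomial.degree_modByMonic_lt (Ξ f) hmonic
        have hdG : G.degree = 2 := by
          rw [hG]
          exact Polynomial.degree_X_pow_sub_C (by norm_num) W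
        rw [hdG] at hlt
        have h2 : (Ξ f %ₘ G).natDegree < 2 :=
          (Polynomial.natDegree_lt_iff_degree_lt hne).mpr (by exact_mod_cast hlt)
        omega
      have hrXC := Polynomial.eq_X_add_C_of_natDegree_le_one hdeg
      set r1 := (Ξ f %ₘ G).coeff 1 with hr1def
      set r0 := (Ξ f %ₘ G).coeff 0 with hr0def
      have hvan : ∀ t₀ u₀ v₀ : ℚ, v₀^2 = u₀^4 + t₀^8 - 1 →
          Polynomial.eval₂ (Polynomial.evalRingHom t₀) u₀ r1 * v₀ +
            Polynomial.eval₂ (Polynomial.evalRingHom t₀) u₀ r0 = 0 := by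
        intro t₀ u₀ v₀ hv
        have h2 := hev t₀ u₀ v₀ hv
        rw [hrXC] at h2
        rw [Polynomial.eval₂_add, Polynomial.eval₂_mul, Polynomial.eval₂_C,
          Polynomial.eval₂_X, Polynomial.eval₂_C] at h2
        exact h2
      have hzero1 : r1 = 0 := by
        apply density
        intro t₀ u₀ v₀ hv0 hveq
        have e1 := hvan t₀ u₀ v₀ hveq
        have e2 := hvan t₀ u₀ (-v₀) (by rw [neg_pow]; simpa using hveq)
        have h3 : Polynomial.eval₂ (Polynomial.evalRingHom t₀) u₀ r1 * v₀ = 0 := by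
          linarith
        exact (mul_eq_zero.mp h3).resolve_right hv0
      have hzero0 : r0 = 0 := by
        apply density
        intro t₀ u₀ v₀ hv0 hveq
        have e1 := hvan t₀ u₀ v₀ hveq
        rw [hzero1] at e1
        simpa using e1
      apply hne
      rw [hrXC, hzero1, hzero0]
      simp
  have hfe : Ξ f = G * (Ξ f /ₘ G) := by
    conv_lhs => rw [← hdecomp]
    rw [hr0, zero_add]
  have hdvd : G ∣ Ξ f := ⟨Ξ f /ₘ G, hfe⟩
  have hdvd2 := map_dvd Ξinv hdvd
  rw [Ξinv_Ξ, hΞG] at hdvd2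
  exact hdvd2


end

end Stmt8Aux

open MvPolynomial

/-- If a polynomial `f ∈ ℚ[t, u, v]` vanishes at every rational triple
`(t₀, u₀, v₀)` with `v₀² = u₀⁴ + t₀⁸ − 1`, then `v² − u⁴ − t⁸ + 1` divides `f`.
Here `t = X 0`, `u = X 1`, `v = X 2`. -/
theorem stmt_8 (f : MvPolynomial (Fin 3) ℚ)
    (hf : ∀ t₀ u₀ v₀ : ℚ, v₀ ^ 2 = u₀ ^ 4 + t₀ ^ 8 - 1 →
      MvPolynomial.eval ![t₀, u₀, v₀] f = 0) :
    ((X 2 : MvPolynomial (Fin 3) ℚ) ^ 2 - (X 1) ^ 4 - (X 0) ^ 8 + 1) ∣ f := by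
  exact Stmt8Aux.main f hf
end

section
/- Let f ∈ ℚ[t, u, v] be a polynomial in three variables. If f(t₀, u₀, v₀) = 0 for every triple of rational numbers (t₀, u₀, v₀) with v₀² = u₀² + t₀⁴ − 1, then the polynomial v² − u² − t⁴ + 1 divides f in ℚ[t, u, v]. (This expresses the Zariski density of the rational points on the surface Y from the m = 2 case of the paper's Example 4.3, whose affine model is v² = u² + t⁴ − 1.) -/
open MvPolynomial

open Polynomial in
/-- The isomorphism-direction map `ℚ[t,u,v] → (ℚ[t,u])[v]`. -/
noncomputable def phi3 : MvPolynomial (Fin 3) ℚ →+* Polynomial (MvPolynomial (Fin 2) ℚ) :=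
  (MvPolynomial.aeval ![Polynomial.C (X 0), Polynomial.C (X 1), Polynomial.X]).toRingHom

open Polynomial in
/-- The inverse-direction map `(ℚ[t,u])[v] → ℚ[t,u,v]`. -/
noncomputable def psi3 : Polynomial (MvPolynomial (Fin 2) ℚ) →+* MvPolynomial (Fin 3) ℚ :=
  Polynomial.eval₂RingHom (MvPolynomial.rename Fin.castSucc).toRingHom (X 2)

lemma psi3_phi3 (f : MvPolynomial (Fin 3) ℚ) : psi3 (phi3 f) = f := by
  have h : psi3.comp phi3 = RingHom.id _ := by
    apply MvPolynomial.ringHom_ext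
    · intro r; simp [phi3, psi3]
    · intro i; fin_cases i <;> simp [phi3, psi3]
  exact congrFun (congrArg (·.toFun) h) f

lemma eval_phi3 (t₀ u₀ v₀ : ℚ) (f : MvPolynomial (Fin 3) ℚ) :
    MvPolynomial.eval ![t₀, u₀, v₀] f =
      Polynomial.eval₂ (MvPolynomial.eval ![t₀, u₀]) v₀ (phi3 f) := by
  have h : (MvPolynomial.eval ![t₀, u₀, v₀]) =
      (Polynomial.eval₂RingHom (MvPolynomial.eval ![t₀, u₀]) v₀).comp phi3 := by
    apply MvPolynomial.ringHom_ext
    · intro r; simp [phi3]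
    · intro i; fin_cases i <;> simp [phi3]
  rw [h]; rfl

/-- The monic quadratic `v² − (u² + t⁴ − 1)` viewed in `(ℚ[t,u])[v]`. -/
noncomputable def q2 : Polynomial (MvPolynomial (Fin 2) ℚ) :=
  Polynomial.X ^ 2 - Polynomial.C ((X 1) ^ 2 + (X 0) ^ 4 - 1)

lemma q2_monic : q2.Monic :=
  Polynomial.monic_X_pow_sub_C _ two_ne_zero

lemma psi3_q2 : psi3 q2 = (X 2 : MvPolynomial (Fin 3) ℚ) ^ 2 - (X 1) ^ 2 - (X 0) ^ 4 + 1 := by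
  have h0 : (Fin.castSucc (0 : Fin 2)) = (0 : Fin 3) := rfl
  have h1 : (Fin.castSucc (1 : Fin 2)) = (1 : Fin 3) := rfl
  simp [psi3, q2, Polynomial.eval₂_pow, h0, h1]
  ring

open Polynomial in
/-- Specialization `ℚ[t,u] → ℚ[u]` at `t = t₀`. -/
noncomputable def theta2 (t₀ : ℚ) : MvPolynomial (Fin 2) ℚ →+* Polynomial ℚ :=
  (MvPolynomial.eval₂Hom Polynomial.C ![Polynomial.C t₀, Polynomial.X])

lemma eval_theta2 (t₀ u₀ : ℚ) (p : MvPolynomial (Fin 2) ℚ) :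
    Polynomial.eval u₀ (theta2 t₀ p) = MvPolynomial.eval ![t₀, u₀] p := by
  have h : (Polynomial.evalRingHom u₀).comp (theta2 t₀) = MvPolynomial.eval ![t₀, u₀] := by
    apply MvPolynomial.ringHom_ext
    · intro r; simp [theta2]
    · intro i; fin_cases i <;> simp [theta2]
  exact congrFun (congrArg (·.toFun) h) p

/-- A 2-variable polynomial over `ℚ` vanishing at `(t₀, u)` for infinitely many `u`,
for every `t₀`, is zero. -/
lemma mv2_zero (p : MvPolynomial (Fin 2) ℚ)
    (h : ∀ t₀ : ℚ, {u : ℚ | MvPolynomial.eval ![t₀, u] p = 0}.Infinite) : p = 0 := by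
  have h2 : ∀ x : Fin 2 → ℚ, MvPolynomial.eval x p = 0 := by
    intro x
    have hz : theta2 (x 0) p = 0 := by
      apply Polynomial.eq_zero_of_infinite_isRoot
      apply Set.Infinite.mono _ (h (x 0))
      intro u hu
      simp only [Set.mem_setOf_eq, Polynomial.IsRoot, eval_theta2]
      exact hu
    have := eval_theta2 (x 0) (x 1) p
    rw [hz] at this
    simp at this
    have hx : x = ![x 0, x 1] := by funext i; fin_cases i <;> rfl
    rw [hx, ← this]
  have := MvPolynomial.funext (p := p) (q := 0) (by simpa using h2)
  simpa using this

lemma infinite_param (c : ℚ) (S : Set ℚ)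
    (hS : ∀ s : ℚ, s ≠ 0 → c + s ^ 2 ≠ 0 → (c - s ^ 2) / (2 * s) ∈ S) :
    S.Infinite := by
  set m : ℚ := max 1 (-c) with hm
  have hm1 : (1 : ℚ) ≤ m := le_max_left _ _
  have hmc : -c ≤ m := le_max_right _ _
  set s : ℕ → ℚ := fun n => m + n + 1 with hs
  have hspos : ∀ n, 0 < s n := by
    intro n
    have : (0:ℚ) ≤ n := Nat.cast_nonneg n
    simp only [hs]; linarith
  have hsgt : ∀ n, m < s n := by
    intro n
    have : (0:ℚ) ≤ n := Nat.cast_nonneg n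
    simp only [hs]; linarith
  have hkey : ∀ n, c + s n ^ 2 > 0 := by
    intro n
    have h1 := hsgt n
    have h2 := hspos n
    nlinarith
  have hprod : ∀ n k, c + s n * s k > 0 := by
    intro n k
    have h1 := hsgt n
    have h2 := hsgt k
    nlinarith
  apply Set.infinite_of_injective_forall_mem
    (f := fun n : ℕ => (c - s n ^ 2) / (2 * s n))
  · intro n k hnk
    have h1 := hspos n
    have h2 := hspos k
    have h3 := hprod n k
    have heq : (c - s n ^ 2) * (2 * s k) = (c - s k ^ 2) * (2 * s n) := by
      field_simp at hnk
      linarith [hnk]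
    have hsnk : s n = s k := by nlinarith
    have : (n : ℚ) = k := by simp only [hs] at hsnk; linarith
    exact_mod_cast this
  · intro n
    exact hS (s n) (ne_of_gt (hspos n)) (ne_of_gt (hkey n))

/-- If a polynomial `f ∈ ℚ[t, u, v]` vanishes at every rational triple
`(t₀, u₀, v₀)` with `v₀² = u₀² + t₀⁴ − 1`, then `v² − u² − t⁴ + 1` divides `f`.
Here `t = X 0`, `u = X 1`, `v = X 2`. -/
theorem stmt_9 (f : MvPolynomial (Fin 3) ℚ)
    (hf : ∀ t₀ u₀ v₀ : ℚ, v₀ ^ 2 = u₀ ^ 2 + t₀ ^ 4 - 1 →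
      MvPolynomial.eval ![t₀, u₀, v₀] f = 0) :
    ((X 2 : MvPolynomial (Fin 3) ℚ) ^ 2 - (X 1) ^ 2 - (X 0) ^ 4 + 1) ∣ f := by
  set r := phi3 f %ₘ q2 with hrdef
  set a := r.coeff 1 with hadef
  set b := r.coeff 0 with hbdef
  have hq2deg : q2.degree = 2 := by
    have := Polynomial.degree_X_pow_sub_C (R := MvPolynomial (Fin 2) ℚ)
      (n := 2) (by norm_num) ((X 1) ^ 2 + (X 0) ^ 4 - 1)
    simpa [q2] using this
  have hrdeg : r.degree ≤ 1 := by
    have h := Polynomial.degree_modByMonic_lt (phi3 f) q2_monic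
    rw [hq2deg] at h
    rw [hrdef]
    exact Order.le_of_lt_succ (by exact_mod_cast h)
  have hreq : r = Polynomial.C a * Polynomial.X + Polynomial.C b :=
    Polynomial.eq_X_add_C_of_degree_le_one hrdeg
  -- key vanishing of the remainder's evaluation
  have key : ∀ t₀ u₀ v₀ : ℚ, v₀ ^ 2 = u₀ ^ 2 + t₀ ^ 4 - 1 →
      MvPolynomial.eval ![t₀, u₀] a * v₀ + MvPolynomial.eval ![t₀, u₀] b = 0 := by
    intro t₀ u₀ v₀ h
    have h1 := hf t₀ u₀ v₀ h
    rw [eval_phi3] at h1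
    have hsplit : phi3 f = r + q2 * (phi3 f /ₘ q2) := by
      rw [hrdef]
      exact (Polynomial.modByMonic_add_div (phi3 f) q2).symm
    rw [hsplit] at h1
    rw [Polynomial.eval₂_add, Polynomial.eval₂_mul] at h1
    have hq0 : Polynomial.eval₂ (MvPolynomial.eval ![t₀, u₀]) v₀ q2 = 0 := by
      simp [q2, Polynomial.eval₂_sub, Polynomial.eval₂_pow]
      rw [h]; ring
    rw [hq0, zero_mul, add_zero, hreq] at h1
    simpa using h1
  -- derive vanishing of a and b at the parametrized dense family
  have hab : ∀ t₀ s : ℚ, s ≠ 0 → (t₀ ^ 4 - 1) + s ^ 2 ≠ 0 →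
      MvPolynomial.eval ![t₀, ((t₀ ^ 4 - 1) - s ^ 2) / (2 * s)] a = 0 ∧
      MvPolynomial.eval ![t₀, ((t₀ ^ 4 - 1) - s ^ 2) / (2 * s)] b = 0 := by
    intro t₀ s hs hcs
    set c : ℚ := t₀ ^ 4 - 1 with hc
    set u : ℚ := (c - s ^ 2) / (2 * s) with hu
    set v : ℚ := (c + s ^ 2) / (2 * s) with hv
    have hrel : v ^ 2 = u ^ 2 + t₀ ^ 4 - 1 := by
      rw [hv, hu]
      field_simp
      ring
    have hrel2 : (-v) ^ 2 = u ^ 2 + t₀ ^ 4 - 1 := by rw [neg_pow]; simpa using hrel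
    have h1 := key t₀ u v hrel
    have h2 := key t₀ u (-v) hrel2
    have hvne : v ≠ 0 := by
      rw [hv]
      exact div_ne_zero hcs (by simpa using hs)
    have hb0 : MvPolynomial.eval ![t₀, u] b = 0 := by linarith
    have ha0 : MvPolynomial.eval ![t₀, u] a = 0 := by
      have : MvPolynomial.eval ![t₀, u] a * v = 0 := by linarith
      rcases mul_eq_zero.mp this with h | h
      · exact h
      · exact absurd h hvne
    exact ⟨ha0, hb0⟩
  have ha : a = 0 := by
    apply mv2_zero
    intro t₀
    apply infinite_param (t₀ ^ 4 - 1)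
    intro s hs hcs
    exact (hab t₀ s hs hcs).1
  have hb : b = 0 := by
    apply mv2_zero
    intro t₀
    apply infinite_param (t₀ ^ 4 - 1)
    intro s hs hcs
    exact (hab t₀ s hs hcs).2
  have hr0 : r = 0 := by rw [hreq, ha, hb]; simp
  have hdvd : phi3 f = q2 * (phi3 f /ₘ q2) := by
    have := Polynomial.modByMonic_add_div (phi3 f) q2
    rw [← hrdef, hr0, zero_add] at this
    exact this.symm
  refine ⟨psi3 (phi3 f /ₘ q2), ?_⟩
  rw [← psi3_q2, ← RingHom.map_mul, ← hdvd, psi3_phi3]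
end

section
/- The polynomial v² − u⁴ − t⁸ + 1 is irreducible in the polynomial ring ℚ[t, u, v]. (This is the defining polynomial of the affine model of the quotient surface Y in the m = 4 case of the paper's Example 4.3; its irreducibility is what makes the surface irreducible, as used in the density argument.) -/
open MvPolynomial

private lemma not_square_aux : ¬ IsSquare ((Polynomial.X : Polynomial ℚ) ^ 8 - 1) := by
  rintro ⟨p, hp⟩
  have hsep : ((Polynomial.X : Polynomial ℚ) ^ 8 - Polynomial.C 1).Separable :=
    Polynomial.separable_X_pow_sub_C 1 (by norm_num) one_ne_zero
  rw [map_one] at hsep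
  have hsf := hsep.squarefree
  have hu : IsUnit p := hsf p (by rw [hp])
  have hdeg : ((Polynomial.X : Polynomial ℚ) ^ 8 - 1).natDegree = 8 := by
    compute_degree!
  rw [hp, Polynomial.natDegree_mul] at hdeg
  · have := Polynomial.natDegree_eq_zero_of_isUnit hu; omega
  · intro h; rw [h] at hu; exact not_isUnit_zero hu
  · intro h; rw [h] at hu; exact not_isUnit_zero hu

private lemma not_square_mv :
    ¬ IsSquare ((X 0 : MvPolynomial (Fin 2) ℚ) ^ 4 + (X 1) ^ 8 - 1) := by
  rintro ⟨p, hp⟩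
  apply not_square_aux
  refine ⟨(aeval ![0, Polynomial.X] : MvPolynomial (Fin 2) ℚ →ₐ[ℚ] Polynomial ℚ) p, ?_⟩
  have := congrArg (aeval ![0, Polynomial.X] : MvPolynomial (Fin 2) ℚ →ₐ[ℚ] Polynomial ℚ) hp
  simpa using this

private lemma not_square_frac :
    ∀ b : FractionRing (MvPolynomial (Fin 2) ℚ), b ^ 2 ≠
      algebraMap (MvPolynomial (Fin 2) ℚ) (FractionRing (MvPolynomial (Fin 2) ℚ))
        ((X 0 : MvPolynomial (Fin 2) ℚ) ^ 4 + (X 1) ^ 8 - 1) := by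
  set R := MvPolynomial (Fin 2) ℚ
  set a : R := (X 0 : R) ^ 4 + (X 1) ^ 8 - 1
  intro b hb
  have hint : IsIntegral R b := by
    refine ⟨Polynomial.X ^ 2 - Polynomial.C a, ?_, ?_⟩
    · apply Polynomial.monic_X_pow_sub_C
      norm_num
    · simp [Polynomial.eval₂_sub, hb]
      exact sub_self _
  obtain ⟨c, hc⟩ := IsIntegrallyClosed.isIntegral_iff.mp hint
  apply not_square_mv
  refine ⟨c, ?_⟩
  have : algebraMap R (FractionRing R) (c * c) = algebraMap R (FractionRing R) a := by
    rw [map_mul, hc, ← pow_two, hb]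
  exact (IsFractionRing.injective R (FractionRing R) this).symm

private lemma irred_aux :
    Irreducible (Polynomial.X ^ 2 -
      Polynomial.C ((X 0 : MvPolynomial (Fin 2) ℚ) ^ 4 + (X 1) ^ 8 - 1)) := by
  set R := MvPolynomial (Fin 2) ℚ
  set a : R := (X 0 : R) ^ 4 + (X 1) ^ 8 - 1
  have hmon : (Polynomial.X ^ 2 - Polynomial.C a).Monic :=
    Polynomial.monic_X_pow_sub_C a (by norm_num)
  apply hmon.irreducible_of_irreducible_map (algebraMap R (FractionRing R))
  have : (Polynomial.X ^ 2 - Polynomial.C a).map (algebraMap R (FractionRing R)) =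
      Polynomial.X ^ 2 - Polynomial.C (algebraMap R (FractionRing R) a) := by
    simp
  rw [this]
  exact X_pow_sub_C_irreducible_of_prime Nat.prime_two not_square_frac

/-- The polynomial `v² − u⁴ − t⁸ + 1` is irreducible in `ℚ[t, u, v]`.
Here `t = X 0`, `u = X 1`, `v = X 2`. -/
theorem stmt_10 :
    Irreducible
      ((X 2 : MvPolynomial (Fin 3) ℚ) ^ 2 - (X 1) ^ 4 - (X 0) ^ 8 + 1) := by
  set e : MvPolynomial (Fin 3) ℚ ≃+* Polynomial (MvPolynomial (Fin 2) ℚ) :=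
    ((renameEquiv ℚ (Equiv.swap (0 : Fin 3) 2)).trans (finSuccEquiv ℚ 2)).toRingEquiv
  have key : e ((X 2 : MvPolynomial (Fin 3) ℚ) ^ 2 - (X 1) ^ 4 - (X 0) ^ 8 + 1) =
      Polynomial.X ^ 2 - Polynomial.C ((X 0 : MvPolynomial (Fin 2) ℚ) ^ 4 + (X 1) ^ 8 - 1) := by
    show (finSuccEquiv ℚ 2) ((rename (Equiv.swap (0 : Fin 3) 2))
        ((X 2 : MvPolynomial (Fin 3) ℚ) ^ 2 - (X 1) ^ 4 - (X 0) ^ 8 + 1)) = _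
    have h2 : (finSuccEquiv ℚ 2) ((rename (Equiv.swap (0:Fin 3) 2))
        (X 2 : MvPolynomial (Fin 3) ℚ)) = Polynomial.X := by
      rw [rename_X, show (Equiv.swap (0:Fin 3) 2) 2 = 0 from by decide, finSuccEquiv_X_zero]
    have h1 : (finSuccEquiv ℚ 2) ((rename (Equiv.swap (0:Fin 3) 2))
        (X 1 : MvPolynomial (Fin 3) ℚ)) = Polynomial.C (X 0) := by
      rw [rename_X, show (Equiv.swap (0:Fin 3) 2) 1 = Fin.succ 0 from by decide,
        finSuccEquiv_X_succ]
    have h0 : (finSuccEquiv ℚ 2) ((rename (Equiv.swap (0:Fin 3) 2))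
        (X 0 : MvPolynomial (Fin 3) ℚ)) = Polynomial.C (X 1) := by
      rw [rename_X, show (Equiv.swap (0:Fin 3) 2) 0 = Fin.succ 1 from by decide,
        finSuccEquiv_X_succ]
    simp only [map_sub, map_add, map_pow, map_one, h0, h1, h2]
    ring
  exact (MulEquiv.irreducible_iff e.toMulEquiv).mp (key ▸ irred_aux)
end
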